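/- arXiv:2407.18090 — 4 statements merged into one kernel-verified Lean document; each statement's English description precedes it below -/
import Mathlib

section
/- There exist a finite alphabet Σ and a history-deterministic generalised coBüchi automaton A over Σ such that every history-deterministic generalised Büchi automaton recognising Σ^ω ∖ L(A) has strictly more states than A. -/
/-- A transition of an automaton: source state, input letter, output colour,
destination state.  (Acceptance is transition-based.) -/
structure AutTrans (Q A Γ : Type) where
  src : Q
  lab : A
  out : Γ
  dst : Q

/-- An (ω-)automaton with finite state set `Q`, input alphabet `A`,
output alphabet `Γ`, initial state `init`, transition set `delta` and
acceptance condition `acc ⊆ Γ^ω`. -/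
structure Automaton (A Γ : Type) where
  Q : Type
  fin : Fintype Q
  init : Q
  delta : Set (AutTrans Q A Γ)
  acc : Set (ℕ → Γ)

/-- The generalised Büchi condition over the colour set `C`
(output alphabet `𝒫(C)`): every colour appears infinitely often. -/
def genBuchi (C : Type) : Set (ℕ → Set C) :=
  {f | ∀ c : C, ∀ n : ℕ, ∃ m : ℕ, n ≤ m ∧ c ∈ f m}

/-- The generalised coBüchi condition over the colour set `C`:
some colour appears only finitely often. -/
def genCoBuchi (C : Type) : Set (ℕ → Set C) :=
  {f | ∃ c : C, ∃ n : ℕ, ∀ m : ℕ, n ≤ m → c ∉ f m}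

namespace Automaton

variable {A Γ : Type}

/-- Number of states. -/
def size (M : Automaton A Γ) : ℕ := @Fintype.card M.Q M.fin

/-- `ρ` is a run of `M` on the word `w`, starting in the state `q`. -/
def IsRunFrom (M : Automaton A Γ) (q : M.Q) (w : ℕ → A)
    (ρ : ℕ → AutTrans M.Q A Γ) : Prop :=
  (ρ 0).src = q ∧ ∀ n : ℕ, ρ n ∈ M.delta ∧ (ρ n).lab = w n ∧ (ρ n).dst = (ρ (n + 1)).src

/-- The language of `M` with initial state `q`. -/
def LangFrom (M : Automaton A Γ) (q : M.Q) : Set (ℕ → A) :=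
  {w | ∃ ρ : ℕ → AutTrans M.Q A Γ, M.IsRunFrom q w ρ ∧ (fun n => (ρ n).out) ∈ M.acc}

/-- The language of `M`. -/
def Lang (M : Automaton A Γ) : Set (ℕ → A) := M.LangFrom M.init

/-- For every state and letter there is at most one outgoing transition. -/
def Deterministic (M : Automaton A Γ) : Prop :=
  ∀ t ∈ M.delta, ∀ t' ∈ M.delta, t.src = t'.src → t.lab = t'.lab → t = t'

/-- For every state and letter there is at least one outgoing transition. -/
def Complete (M : Automaton A Γ) : Prop :=
  ∀ (p : M.Q) (a : A), ∃ t ∈ M.delta, t.src = p ∧ t.lab = a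

/-- The infinite sequence of transitions chosen by a resolver `r` on the word `w`
(`r` is applied to all nonempty finite prefixes of `w`). -/
def resRun (M : Automaton A Γ) (r : List A → AutTrans M.Q A Γ) (w : ℕ → A) :
    ℕ → AutTrans M.Q A Γ :=
  fun n => r (List.ofFn fun i : Fin (n + 1) => w i)

/-- `r` is a resolver for `M`: on every word it induces a run,
which is accepting whenever the word is in the language of `M`. -/
def IsResolver (M : Automaton A Γ) (r : List A → AutTrans M.Q A Γ) : Prop :=
  ∀ w : ℕ → A, M.IsRunFrom M.init w (M.resRun r w) ∧
    (w ∈ M.Lang → (fun n => (M.resRun r w n).out) ∈ M.acc)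

/-- History-determinism: existence of a resolver. -/
def HistoryDeterministic (M : Automaton A Γ) : Prop := ∃ r, M.IsResolver r

/-- `M` admits a resolver such that every state occurs on some accepting run
induced by the resolver. -/
def ResolverTrim (M : Automaton A Γ) : Prop :=
  ∃ r, M.IsResolver r ∧ ∀ q : M.Q, ∃ w ∈ M.Lang, ∃ n : ℕ, (M.resRun r w n).src = q

/-- Reachability along transitions of `M`. -/
def Reach (M : Automaton A Γ) (p q : M.Q) : Prop :=
  Relation.ReflTransGen (fun x y => ∃ t ∈ M.delta, t.src = x ∧ t.dst = y) p q

/-- Nondeterministic choices lead to language-equivalent states. -/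
def SemanticallyDeterministic (M : Automaton A Γ) : Prop :=
  ∀ t ∈ M.delta, ∀ t' ∈ M.delta, t.src = t'.src → t.lab = t'.lab →
    M.LangFrom t.dst = M.LangFrom t'.dst

/- CoBüchi notions: a coBüchi automaton has output alphabet `Set Unit`
(`𝒫(C)` with `|C| = 1`); a transition is a coBüchi transition iff its output
is `{()}` (i.e. `() ∈ out`), and safe iff its output is `∅`. -/

/-- A safe (non-coBüchi) transition from `p` to `q`. -/
def SafeStep (M : Automaton A (Set Unit)) (p q : M.Q) : Prop :=
  ∃ t ∈ M.delta, t.src = p ∧ t.dst = q ∧ () ∉ t.out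

/-- `p` and `q` lie in the same safe component (same SCC of the safe graph). -/
def SafeConn (M : Automaton A (Set Unit)) (p q : M.Q) : Prop :=
  Relation.ReflTransGen M.SafeStep p q ∧ Relation.ReflTransGen M.SafeStep q p

/-- The safe component (as a set of states) of `q`. -/
def safeComponentOf (M : Automaton A (Set Unit)) (q : M.Q) : Set M.Q :=
  {p | M.SafeConn p q}

/-- `(S, D)` is a safe component of `M`, given with its set of safe transitions. -/
def IsSafeComponent (M : Automaton A (Set Unit)) (S : Set M.Q)
    (D : Set (AutTrans M.Q A (Set Unit))) : Prop :=
  (∃ q : M.Q, S = M.safeComponentOf q) ∧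
    D = {t | t ∈ M.delta ∧ t.src ∈ S ∧ t.dst ∈ S ∧ () ∉ t.out}

/-- The safe language of the state `q`: words labelling an infinite safe path from `q`. -/
def SafeLang (M : Automaton A (Set Unit)) (q : M.Q) : Set (ℕ → A) :=
  {w | ∃ ρ : ℕ → AutTrans M.Q A (Set Unit),
    M.IsRunFrom q w ρ ∧ ∀ n : ℕ, () ∉ (ρ n).out}

/-- The automaton restricted to safe transitions is deterministic. -/
def SafeDeterministic (M : Automaton A (Set Unit)) : Prop :=
  ∀ t ∈ M.delta, ∀ t' ∈ M.delta, () ∉ t.out → () ∉ t'.out →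
    t.src = t'.src → t.lab = t'.lab → t = t'

/-- Every transition joining two distinct safe components is a coBüchi transition. -/
def NormalForm (M : Automaton A (Set Unit)) : Prop :=
  ∀ t ∈ M.delta, () ∉ t.out → M.SafeConn t.src t.dst

/-- A coBüchi automaton is nice if all states are reachable and it is
semantically deterministic, in normal form, and safe deterministic. -/
def Nice (M : Automaton A (Set Unit)) : Prop :=
  (∀ q : M.Q, M.Reach M.init q) ∧ M.SemanticallyDeterministic ∧
    M.NormalForm ∧ M.SafeDeterministic

/-- Equivalent states with equal safe languages are equal. -/
def SafeMinimal (M : Automaton A (Set Unit)) : Prop :=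
  ∀ p q : M.Q, M.LangFrom p = M.LangFrom q → M.SafeLang p = M.SafeLang q → p = q

/-- Equivalent states with safe languages comparable for inclusion lie in the
same safe component. -/
def SafeCentralised (M : Automaton A (Set Unit)) : Prop :=
  ∀ p q : M.Q, M.LangFrom p = M.LangFrom q →
    (M.SafeLang p ⊆ M.SafeLang q ∨ M.SafeLang q ⊆ M.SafeLang p) → M.SafeConn p q

end Automaton

/-- The word `u · w`. -/
def wordAppend {A : Type} (u : List A) (w : ℕ → A) : ℕ → A :=
  fun n => if h : n < u.length then u.get ⟨n, h⟩ else w (n - u.length)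

/-- The residual `u⁻¹L`. -/
def residualLang {A : Type} (u : List A) (L : Set (ℕ → A)) : Set (ℕ → A) :=
  {w | wordAppend u w ∈ L}

/-- `L` is prefix-independent: `u⁻¹L = L` for every finite word `u`. -/
def PrefixIndependent {A : Type} (L : Set (ℕ → A)) : Prop :=
  ∀ u : List A, residualLang u L = L

/-- The local alphabet `Σ_R` at the residual `R`: nonempty finite words `v`
with `v⁻¹R = R` such that no proper nonempty prefix `v'` of `v`
satisfies `v'⁻¹R = R`.  (For `R = u⁻¹L` this says `(uv)⁻¹L = u⁻¹L` and
`(uv')⁻¹L ≠ u⁻¹L` for proper nonempty prefixes.) -/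
def localAlphabet {A : Type} (R : Set (ℕ → A)) : Set (List A) :=
  {v | v ≠ [] ∧ residualLang v R = R ∧
    ∀ v' : List A, v' <+: v → v' ≠ [] → v' ≠ v → residualLang v' R ≠ R}

/-- `PathCol M q w X p`: there is a finite path of `M` from `q` to `p`
labelled by `w` whose transitions produce exactly the set of colours `X`
(the union of the outputs along the path). -/
inductive PathCol {A C : Type} (M : Automaton A (Set C)) :
    M.Q → List A → Set C → M.Q → Prop
  | nil (q : M.Q) : PathCol M q [] ∅ q
  | cons {q r : M.Q} {a : A} {w : List A} {X : Set C}
      (t : AutTrans M.Q A (Set C)) (ht : t ∈ M.delta) (hsrc : t.src = q)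
      (hlab : t.lab = a) (htail : PathCol M t.dst w X r) :
      PathCol M q (a :: w) (t.out ∪ X) r

/-- The localisation `A|_R` of a generalised coBüchi automaton `M` to the
residual `R`, with initial state `q0`: states are the states of `M`
recognising `R`, the alphabet is `Σ_R`, and there is a transition
`q →^{w:X} p` for every finite path of `M` from `q` to `p` labelled by
`w ∈ Σ_R` producing the set of colours `X`. -/
noncomputable def localAut {A C : Type} (M : Automaton A (Set C)) (R : Set (ℕ → A))
    (q0 : {q : M.Q // M.LangFrom q = R}) :
    Automaton (↥(localAlphabet R)) (Set C) where
  Q := {q : M.Q // M.LangFrom q = R}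
  fin := by
    letI := M.fin
    classical
    infer_instance
  init := q0
  delta := {t | PathCol M t.src.1 t.lab.1 t.out t.dst.1}
  acc := genCoBuchi C

/-- The automaton `M` with initial state `q`. -/
def withInit {A Γ : Type} (M : Automaton A Γ) (q : M.Q) : Automaton A Γ :=
  { M with init := q }

/-- Recolour the automaton `M` via `f`, keeping states, initial state and the
underlying transitions, and replacing the acceptance condition by `acc'`. -/
def recolor {A Γ Γ' : Type} (M : Automaton A Γ) (f : AutTrans M.Q A Γ → Γ')
    (acc' : Set (ℕ → Γ')) : Automaton A Γ' where
  Q := M.Q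
  fin := M.fin
  init := M.init
  delta := {t' | ∃ t ∈ M.delta, t'.src = t.src ∧ t'.lab = t.lab ∧ t'.out = f t ∧ t'.dst = t.dst}
  acc := acc'

/-- Concatenation of the first `k` blocks of a sequence of finite words. -/
def flattenPrefix {A : Type} (u : ℕ → List A) (k : ℕ) : List A :=
  (List.ofFn fun i : Fin k => u i).flatten

/-- `x ∈ A^ω` is the concatenation of the infinite sequence of finite words `u`. -/
def IsFlatten {A : Type} (u : ℕ → List A) (x : ℕ → A) : Prop :=
  ∀ (k n : ℕ) (h : n < (flattenPrefix u k).length),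
    (flattenPrefix u k).get ⟨n, h⟩ = x n

/-- Cascade composition `B ∘ M`: the outputs of `M` are fed as inputs to `B`. -/
def composeAut {A Γ Γ' : Type} (B : Automaton Γ Γ') (M : Automaton A Γ) :
    Automaton A Γ' where
  Q := M.Q × B.Q
  fin := by letI := M.fin; letI := B.fin; infer_instance
  init := (M.init, B.init)
  delta := {t | ∃ tM ∈ M.delta, ∃ tB ∈ B.delta,
    t.src = (tM.src, tB.src) ∧ t.lab = tM.lab ∧ tB.lab = tM.out ∧
    t.out = tB.out ∧ t.dst = (tM.dst, tB.dst)}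
  acc := B.acc

/-- The language `L_G = ⋂_v L_v` associated with a graph `G`: words over the
vertices such that for every vertex `v`, either the factor `vv` occurs
infinitely often, or letters outside the closed neighbourhood `N[v]` occur
infinitely often. -/
def LG {V : Type} (G : SimpleGraph V) : Set (ℕ → V) :=
  {w | ∀ v : V, (∀ n : ℕ, ∃ m : ℕ, n ≤ m ∧ w m = v ∧ w (m + 1) = v) ∨
      (∀ n : ℕ, ∃ m : ℕ, n ≤ m ∧ w m ≠ v ∧ ¬ G.Adj v (w m))}

/-!
The automaton `squareAut` has two states and recognises the words in which some letter `v` has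
only finitely many squares `vv`. It is history-deterministic: the resolver watches one letter and
moves on to the next one (cyclically) whenever the watched letter forms a square; on a word of the
language this happens only finitely often, and from then on the watched colour is avoided.

Conversely, an accepting run of a generalised Büchi automaton with at most two states eventually
stays within two states `d, e` and uses transitions `d → e` and `e → d` (possibly `d = e`).
Inserting this two-step loop after every later transition keeps the run accepting, and for a letter
`x` labelling neither transition the new word has only finitely many squares `xx`. With three
letters such an `x` exists, so no such automaton recognises the words in which every square recurs,
which form the complement of the language of `squareAut`.
-/

open Filter

section Sequences

variable {α : Type*}

theorem eq_of_le_of_succ_eq {f : ℕ → α} {N : ℕ} (h : ∀ m ≥ N, f m = f N → f (m + 1) = f m)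
    {m : ℕ} (hm : N ≤ m) : f m = f N := by
  induction m, hm using Nat.le_induction with
  | base => rfl
  | succ m hm ih => rw [h m hm ih, ih]

theorem exists_ge_eq_and_succ_ne {f : ℕ → α} (hf : ∀ N, ∃ m ≥ N, f (m + 1) ≠ f m) (n : ℕ) :
    ∃ m ≥ n, f m = f n ∧ f (m + 1) ≠ f m := by
  by_contra! h
  obtain ⟨m, hm, hne⟩ := hf n
  exact hne ((eq_of_le_of_succ_eq h (by omega)).trans (eq_of_le_of_succ_eq h hm).symm)

open Fin.NatCast in
theorem exists_ge_eq_and_succ_ne_of_cyclic {k : ℕ} [NeZero k] {f : ℕ → Fin k}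
    (hstep : ∀ m, f (m + 1) = f m ∨ f (m + 1) = f m + 1)
    (hf : ∀ N, ∃ m ≥ N, f (m + 1) ≠ f m) (u : Fin k) (n : ℕ) :
    ∃ m ≥ n, f m = u ∧ f (m + 1) ≠ f m := by
  have reach : ∀ i : ℕ, ∃ m ≥ n, f m = f n + (i : Fin k) ∧ f (m + 1) ≠ f m := by
    intro i
    induction i with
    | zero => simpa only [Nat.cast_zero, add_zero] using exists_ge_eq_and_succ_ne hf n
    | succ i ih =>
      obtain ⟨m, hm, hfm, hne⟩ := ih
      obtain ⟨m', hm', hfm', hne'⟩ := exists_ge_eq_and_succ_ne hf (m + 1)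
      refine ⟨m', by omega, ?_, hne'⟩
      rw [hfm', (hstep m).resolve_left hne, hfm, Nat.cast_succ, add_assoc]
  simpa only [Fin.cast_val_eq_self, add_sub_cancel] using reach (u - f n).val

theorem eq_or_eq_of_card_le_two {Q : Type*} [Fintype Q] (hQ : Fintype.card Q ≤ 2) {a b : Q}
    (hab : a ≠ b) (q : Q) : q = a ∨ q = b := by
  classical
  by_contra! h
  have h3 : ({a, b, q} : Finset Q).card = 3 :=
    Finset.card_eq_three.2 ⟨a, b, q, hab, h.1.symm, h.2.symm, rfl⟩
  have := Finset.card_le_univ ({a, b, q} : Finset Q)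
  omega

theorem exists_back_and_forth_of_card_le_two {Q : Type*} [Fintype Q]
    (hQ : Fintype.card Q ≤ 2) (s : ℕ → Q) :
    ∃ N i j, s (i + 1) = s j ∧ s (j + 1) = s i ∧ ∀ n ≥ N, s n = s i ∨ s n = s j := by
  by_cases hconst : ∃ N, ∀ n ≥ N, s (n + 1) = s n
  · obtain ⟨N, hN⟩ := hconst
    exact ⟨N, N, N, hN N le_rfl, hN N le_rfl,
      fun n hn => Or.inl (eq_of_le_of_succ_eq (fun m hm _ => hN m hm) hn)⟩
  push Not at hconst
  obtain ⟨i, -, hi⟩ := hconst 0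
  have hpair := eq_or_eq_of_card_le_two hQ (Ne.symm hi)
  obtain ⟨j, -, hj, hj'⟩ := exists_ge_eq_and_succ_ne hconst (i + 1)
  refine ⟨0, i, j, hj.symm, ((hpair _).resolve_right (hj ▸ hj')), fun n _ => ?_⟩
  rw [hj]
  exact hpair (s n)

end Sequences

section Interleave

variable {α : Type*}

def splice (N : ℕ) (f g : ℕ → α) (k : ℕ) : α := if k < N then f k else g (k - N)

@[simp] theorem splice_add (N : ℕ) (f g : ℕ → α) (k : ℕ) : splice N f g (N + k) = g k := by
  simp [splice]

@[simp] theorem splice_self (N : ℕ) (f g : ℕ → α) : splice N f g N = g 0 := by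
  simp [splice]

theorem splice_of_lt {N k : ℕ} (f g : ℕ → α) (hk : k < N) : splice N f g k = f k := if_pos hk

def interleave3 (f g h : ℕ → α) (k : ℕ) : α :=
  if k % 3 = 0 then f (k / 3) else if k % 3 = 1 then g (k / 3) else h (k / 3)

@[simp] theorem interleave3_three_mul (f g h : ℕ → α) (j : ℕ) :
    interleave3 f g h (3 * j) = f j := by
  simp [interleave3]

@[simp] theorem interleave3_three_mul_add_one (f g h : ℕ → α) (j : ℕ) :
    interleave3 f g h (3 * j + 1) = g j := by
  simp [interleave3, Nat.add_mod, show (3 * j + 1) / 3 = j by omega]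

@[simp] theorem interleave3_three_mul_add_two (f g h : ℕ → α) (j : ℕ) :
    interleave3 f g h (3 * j + 2) = h j := by
  simp [interleave3, Nat.add_mod, show (3 * j + 2) / 3 = j by omega]

end Interleave

open Classical in
noncomputable def detourRun {Q A Γ : Type} (ρ : ℕ → AutTrans Q A Γ) (t₁ t₂ : AutTrans Q A Γ) :
    ℕ → AutTrans Q A Γ :=
  interleave3 ρ (fun j => if (ρ j).dst = t₁.src then t₁ else t₂)
    (fun j => if (ρ j).dst = t₁.src then t₂ else t₁)

theorem detourRun_mem_or_succ_mem {Q A Γ : Type} (ρ : ℕ → AutTrans Q A Γ)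
    (t₁ t₂ : AutTrans Q A Γ) (k : ℕ) :
    detourRun ρ t₁ t₂ k ∈ ({t₁, t₂} : Set _) ∨ detourRun ρ t₁ t₂ (k + 1) ∈ ({t₁, t₂} : Set _) := by
  obtain ⟨j, rfl | rfl | rfl⟩ : ∃ j, k = 3 * j ∨ k = 3 * j + 1 ∨ k = 3 * j + 2 := ⟨k / 3, by omega⟩
  · right; simp only [detourRun, interleave3_three_mul_add_one]; split_ifs <;> simp
  · left; simp only [detourRun, interleave3_three_mul_add_one]; split_ifs <;> simp
  · left; simp only [detourRun, interleave3_three_mul_add_two]; split_ifs <;> simp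

theorem mem_genBuchi_of_forall_exists_ge_subset {C : Type} {f g : ℕ → Set C}
    (hf : f ∈ genBuchi C) (h : ∀ n, ∃ k ≥ n, f n ⊆ g k) : g ∈ genBuchi C := by
  intro c n
  obtain ⟨m, hm, hc⟩ := hf c n
  obtain ⟨k, hk, hsub⟩ := h m
  exact ⟨k, hm.trans hk, hsub hc⟩

namespace Automaton

variable {A Γ : Type} {M : Automaton A Γ} {q : M.Q} {w : ℕ → A} {ρ : ℕ → AutTrans M.Q A Γ}

theorem IsRunFrom.drop (hρ : M.IsRunFrom q w ρ) (N : ℕ) :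
    M.IsRunFrom (ρ N).src (fun n => w (N + n)) (fun n => ρ (N + n)) :=
  ⟨rfl, fun n => hρ.2 (N + n)⟩

theorem IsRunFrom.splice (hρ : M.IsRunFrom q w ρ) {N : ℕ} {w' : ℕ → A}
    {ψ : ℕ → AutTrans M.Q A Γ} (hψ : M.IsRunFrom (ρ N).src w' ψ) :
    M.IsRunFrom q (_root_.splice N w w') (_root_.splice N ρ ψ) := by
  refine ⟨?_, fun n => ?_⟩
  · rcases Nat.eq_zero_or_pos N with rfl | hN
    · simpa [_root_.splice] using hψ.1.trans hρ.1
    · rw [splice_of_lt _ _ hN]; exact hρ.1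
  rcases lt_or_ge n N with hn | hn
  · rw [splice_of_lt _ _ hn, splice_of_lt _ _ hn]
    refine ⟨(hρ.2 n).1, (hρ.2 n).2.1, (hρ.2 n).2.2.trans ?_⟩
    rcases (Nat.succ_le_of_lt hn).lt_or_eq with hn' | rfl
    · rw [splice_of_lt _ _ hn']
    · rw [splice_self, hψ.1]
  · obtain ⟨k, rfl⟩ := Nat.exists_eq_add_of_le hn
    simpa only [add_assoc, splice_add] using hψ.2 k

theorem IsRunFrom.detourRun (hρ : M.IsRunFrom q w ρ) {t₁ t₂ : AutTrans M.Q A Γ}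
    (ht₁ : t₁ ∈ M.delta) (ht₂ : t₂ ∈ M.delta) (h₁₂ : t₁.dst = t₂.src) (h₂₁ : t₂.dst = t₁.src)
    (hdst : ∀ n, (ρ n).dst = t₁.src ∨ (ρ n).dst = t₂.src) :
    M.IsRunFrom q (fun k => (_root_.detourRun ρ t₁ t₂ k).lab) (_root_.detourRun ρ t₁ t₂) := by
  refine ⟨by simpa [_root_.detourRun] using interleave3_three_mul ρ _ _ 0 ▸ hρ.1, fun k => ?_⟩
  obtain ⟨j, rfl | rfl | rfl⟩ : ∃ j, k = 3 * j ∨ k = 3 * j + 1 ∨ k = 3 * j + 2 := ⟨k / 3, by omega⟩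
  all_goals simp only [_root_.detourRun, interleave3_three_mul, interleave3_three_mul_add_one,
    interleave3_three_mul_add_two, show 3 * j + 1 + 1 = 3 * j + 2 by ring,
    show 3 * j + 2 + 1 = 3 * (j + 1) by ring, true_and]
  · refine ⟨(hρ.2 j).1, ?_⟩
    split_ifs with h
    exacts [h, (hdst j).resolve_left h]
  · split_ifs
    exacts [⟨ht₁, h₁₂⟩, ⟨ht₂, h₂₁⟩]
  · rw [← (hρ.2 j).2.2]
    split_ifs with h
    exacts [⟨ht₂, h₂₁.trans h.symm⟩, ⟨ht₁, h₁₂.trans ((hdst j).resolve_left h).symm⟩]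

theorem exists_mem_lang_eventually_not_square {Λ C : Type} (B : Automaton Λ (Set C))
    (hacc : B.acc = genBuchi C) (hB : B.size ≤ 2) {w : ℕ → Λ} (hw : w ∈ B.Lang) :
    ∃ a b : Λ, ∀ x, x ≠ a → x ≠ b →
      ∃ w' ∈ B.Lang, ∀ᶠ n in atTop, ¬(w' n = x ∧ w' (n + 1) = x) := by
  obtain ⟨ρ, hρ, hρacc⟩ := hw
  let _ : Fintype B.Q := B.fin
  obtain ⟨N, i, j, hij, hji, hN⟩ := exists_back_and_forth_of_card_le_two hB fun n => (ρ n).src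
  refine ⟨(ρ i).lab, (ρ j).lab, fun x hxi hxj => ?_⟩
  set σ := detourRun (fun n => ρ (N + n)) (ρ i) (ρ j)
  have hσ : B.IsRunFrom (ρ N).src (fun k => (σ k).lab) σ :=
    (hρ.drop N).detourRun (hρ.2 i).1 (hρ.2 j).1 ((hρ.2 i).2.2.trans hij)
      ((hρ.2 j).2.2.trans hji) fun n => (hρ.2 (N + n)).2.2 ▸ hN _ (by omega)
  refine ⟨splice N w fun k => (σ k).lab, ⟨splice N ρ σ, hρ.splice hσ, ?_⟩,
    eventually_atTop.2 ⟨N, fun n hn => ?_⟩⟩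
  · rw [hacc] at hρacc ⊢
    refine mem_genBuchi_of_forall_exists_ge_subset hρacc fun n => ?_
    rcases lt_or_ge n N with hn | hn
    · exact ⟨n, le_rfl, by rw [splice_of_lt _ _ hn]⟩
    · obtain ⟨m, rfl⟩ := Nat.exists_eq_add_of_le hn
      exact ⟨N + 3 * m, by omega, by simp [σ, detourRun]⟩
  · obtain ⟨m, rfl⟩ := Nat.exists_eq_add_of_le hn
    rintro ⟨h₁, h₂⟩
    rw [splice_add] at h₁
    rw [add_assoc, splice_add] at h₂
    have hlab : ∀ t ∈ ({ρ i, ρ j} : Set _), t.lab ≠ x := by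
      rintro t (rfl | rfl)
      exacts [hxi.symm, hxj.symm]
    rcases detourRun_mem_or_succ_mem _ _ _ m with h | h
    exacts [hlab _ h h₁, hlab _ h h₂]

variable {S : Type}

def trace (step : S → A → S) (s₀ : S) (w : ℕ → A) : ℕ → S
  | 0 => s₀
  | n + 1 => step (trace step s₀ w n) (w n)

theorem foldl_ofFn_eq_trace (step : S → A → S) (s₀ : S) (w : ℕ → A) (n : ℕ) :
    (List.ofFn fun i : Fin n => w i).foldl step s₀ = trace step s₀ w n := by
  induction n with
  | zero => rfl
  | succ n ih =>
    rw [List.ofFn_succ', List.concat_eq_append, List.foldl_concat]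
    simp only [Fin.val_castSucc, Fin.val_last, ih, trace]

def foldResolver [Inhabited A] (step : S → A → S) (s₀ : S) (move : S → A → AutTrans M.Q A Γ)
    (u : List A) : AutTrans M.Q A Γ :=
  move (u.dropLast.foldl step s₀) (u.getLastD default)

theorem resRun_foldResolver [Inhabited A] (step : S → A → S) (s₀ : S)
    (move : S → A → AutTrans M.Q A Γ) (w : ℕ → A) (n : ℕ) :
    M.resRun (foldResolver step s₀ move) w n = move (trace step s₀ w n) (w n) := by
  rw [resRun, foldResolver, List.ofFn_succ', List.concat_eq_append, List.dropLast_concat,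
    List.getLastD_concat]
  simp only [Fin.val_castSucc, Fin.val_last, foldl_ofFn_eq_trace]

theorem isRunFrom_foldResolver [Inhabited A] {step : S → A → S} {s₀ : S}
    {move : S → A → AutTrans M.Q A Γ} (π : S → M.Q) (hmove : ∀ s a, move s a ∈ M.delta)
    (hsrc : ∀ s a, (move s a).src = π s) (hlab : ∀ s a, (move s a).lab = a)
    (hdst : ∀ s a, (move s a).dst = π (step s a)) (w : ℕ → A) :
    M.IsRunFrom (π s₀) w (M.resRun (foldResolver step s₀ move) w) := by
  simp [IsRunFrom, resRun_foldResolver, hsrc, hlab, hdst, hmove, trace]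

end Automaton

def recurrentSquares (Λ : Type) : Set (ℕ → Λ) :=
  {w | ∀ v, ∃ᶠ m in atTop, w m = v ∧ w (m + 1) = v}

open Fin.NatCast in
theorem recurrentSquares_nonempty (n : ℕ) [NeZero n] : (recurrentSquares (Fin n)).Nonempty := by
  refine ⟨fun m => ((m / 2 : ℕ) : Fin n), fun v => frequently_atTop.2 fun N => ?_⟩
  have hN : N ≤ n * N := Nat.le_mul_of_pos_left N (Nat.pos_of_neZero n)
  have hv : ∀ r < 2, (((2 * (n * N + v) + r) / 2 : ℕ) : Fin n) = v := fun r hr => by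
    ext
    rw [Fin.val_natCast, show (2 * (n * N + v) + r) / 2 = n * N + v by omega, Nat.mul_add_mod,
      Nat.mod_eq_of_lt v.isLt]
  exact ⟨2 * (n * N + v), by omega, hv 0 two_pos, hv 1 one_lt_two⟩

theorem two_lt_size_of_lang_eq_recurrentSquares {n : ℕ} (hn : 3 ≤ n) {C : Type}
    (B : Automaton (Fin n) (Set C)) (hacc : B.acc = genBuchi C)
    (hB : B.Lang = recurrentSquares (Fin n)) : 2 < B.size := by
  by_contra! hsize
  have : NeZero n := ⟨by omega⟩
  obtain ⟨w, hw⟩ := recurrentSquares_nonempty n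
  obtain ⟨a, b, hab⟩ := B.exists_mem_lang_eventually_not_square hacc hsize (hB ▸ hw)
  obtain ⟨x, -, hx⟩ := Finset.exists_mem_notMem_of_card_lt_card
    (s := {a, b}) (t := Finset.univ) (by simpa using (Finset.card_le_two).trans_lt hn)
  obtain ⟨w', hw', hsq⟩ := hab x (by simp_all) (by simp_all)
  exact (hB ▸ hw') x hsq

/-- A run avoids colour `v` exactly when it moves to `true` on each `v` read in `false` and leaves
`true` only on letters other than `v`; so it can avoid `v` from some point on iff `vv` occurs only
finitely often. -/
def squareAut (Λ : Type) : Automaton Λ (Set Λ) where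
  Q := Bool
  fin := inferInstance
  init := false
  delta := {t | (t.dst = false ∧ t.out = {t.lab}) ∨
    (t.src = false ∧ t.dst = true ∧ t.out = {t.lab}ᶜ) ∨
    (t.src = true ∧ t.dst = true ∧ t.out = Set.univ)}
  acc := genCoBuchi Λ

namespace squareAut

variable {Λ : Type}

theorem size : (squareAut Λ).size = 2 := Fintype.card_bool

theorem mem_out_or_mem_out {t t' : AutTrans Bool Λ (Set Λ)} (ht : t ∈ (squareAut Λ).delta)
    (ht' : t' ∈ (squareAut Λ).delta) (h : t.dst = t'.src) {v : Λ} (hv : t.lab = v)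
    (hv' : t'.lab = v) : v ∈ t.out ∨ v ∈ t'.out := by
  rcases ht with ⟨-, ho⟩ | ⟨-, hd, -⟩ | ⟨-, -, ho⟩
  · simp [ho, hv]
  · rcases ht' with ⟨-, ho'⟩ | ⟨hs', -⟩ | ⟨-, -, ho'⟩
    · simp [ho', hv']
    · simp_all
    · simp [ho']
  · simp [ho]

theorem lang_subset : (squareAut Λ).Lang ⊆ (recurrentSquares Λ)ᶜ := by
  rintro w ⟨ρ, hρ, c, N, hc⟩ hw
  obtain ⟨m, hm, hwm, hwm'⟩ := frequently_atTop.1 (hw c) N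
  rcases mem_out_or_mem_out (hρ.2 m).1 (hρ.2 (m + 1)).1 (hρ.2 m).2.2
    ((hρ.2 m).2.1.trans hwm) ((hρ.2 (m + 1)).2.1.trans hwm') with h | h
  exacts [hc m hm h, hc (m + 1) (by omega) h]

end squareAut

section Watcher

variable {n : ℕ}

/-- The resolver's state `(b, v)` consists of the watched letter `v` and the state `b` of
`squareAut`, which is `true` iff the last letter was `v` and did not complete a square `vv`. -/
def watchStep [NeZero n] (p : Bool × Fin n) (a : Fin n) : Bool × Fin n :=
  (decide (p.1 = false ∧ a = p.2), if p.1 = true ∧ a = p.2 then p.2 + 1 else p.2)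

def watchMove (p : Bool × Fin n) (a : Fin n) : AutTrans Bool (Fin n) (Set (Fin n)) :=
  ⟨p.1, a, if p.1 = false ∧ a = p.2 then {a}ᶜ else {a}, decide (p.1 = false ∧ a = p.2)⟩

theorem watchMove_mem (p : Bool × Fin n) (a : Fin n) :
    watchMove p a ∈ (squareAut (Fin n)).delta := by
  unfold watchMove
  split_ifs with h
  · exact Or.inr (Or.inl ⟨h.1, by simp [h], rfl⟩)
  · exact Or.inl ⟨by simp [h], rfl⟩

def watchTrace [NeZero n] (w : ℕ → Fin n) : ℕ → Bool × Fin n :=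
  Automaton.trace watchStep (false, 0) w

variable [NeZero n] (w : ℕ → Fin n)

theorem watchTrace_succ (m : ℕ) : watchTrace w (m + 1) = watchStep (watchTrace w m) (w m) := rfl

theorem watchTrace_succ_eq_or (m : ℕ) :
    (watchTrace w (m + 1)).2 = (watchTrace w m).2 ∨
      (watchTrace w (m + 1)).2 = (watchTrace w m).2 + 1 := by
  rw [watchTrace_succ, watchStep]
  split_ifs <;> simp

theorem watchTrace_violation_of_succ_ne {m : ℕ}
    (h : (watchTrace w (m + 1)).2 ≠ (watchTrace w m).2) :
    (watchTrace w m).1 = true ∧ w m = (watchTrace w m).2 := by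
  rw [watchTrace_succ, watchStep] at h
  split_ifs at h with hv
  exacts [hv, absurd rfl h]

theorem watchTrace_square {m : ℕ} (h : (watchTrace w (m + 2)).2 ≠ (watchTrace w (m + 1)).2) :
    w m = (watchTrace w (m + 1)).2 ∧ w (m + 1) = (watchTrace w (m + 1)).2 := by
  obtain ⟨hb, hw⟩ := watchTrace_violation_of_succ_ne w h
  rw [watchTrace_succ, watchStep] at hb
  simp only [decide_eq_true_eq] at hb
  refine ⟨?_, hw⟩
  rw [watchTrace_succ, watchStep, if_neg (by simp [hb.1])]
  exact hb.2

theorem watchTrace_succ_ne_of_mem_out (hn : 2 ≤ n) {m : ℕ}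
    (h : (watchTrace w m).2 ∈ (watchMove (watchTrace w m) (w m)).out) :
    (watchTrace w (m + 1)).2 ≠ (watchTrace w m).2 := by
  unfold watchMove at h
  split_ifs at h with hc
  · simp [hc.2] at h
  · have hv : w m = (watchTrace w m).2 := (Set.mem_singleton_iff.1 h).symm
    have hb : (watchTrace w m).1 = true := by simpa [hv] using hc
    rw [watchTrace_succ, watchStep, if_pos ⟨hb, hv⟩]
    intro h1
    have := congrArg Fin.val (add_eq_left.1 h1)
    rw [Fin.val_one', Nat.mod_eq_of_lt (by omega), Fin.val_zero] at this
    exact one_ne_zero this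

end Watcher

namespace squareAut

variable {n : ℕ} [NeZero n]

def resolver : List (Fin n) → AutTrans Bool (Fin n) (Set (Fin n)) :=
  Automaton.foldResolver (M := squareAut (Fin n)) watchStep (false, 0) watchMove

theorem resRun_resolver (w : ℕ → Fin n) (m : ℕ) :
    (squareAut (Fin n)).resRun resolver w m = watchMove (watchTrace w m) (w m) :=
  Automaton.resRun_foldResolver _ _ _ w m

theorem isRunFrom_resolver (w : ℕ → Fin n) :
    (squareAut (Fin n)).IsRunFrom (squareAut (Fin n)).init w
      ((squareAut (Fin n)).resRun resolver w) :=
  Automaton.isRunFrom_foldResolver Prod.fst watchMove_mem (fun _ _ => rfl) (fun _ _ => rfl)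
    (fun _ _ => rfl) w

theorem resolver_accepting (hn : 2 ≤ n) {w : ℕ → Fin n} (hw : w ∉ recurrentSquares (Fin n)) :
    (fun m => ((squareAut (Fin n)).resRun resolver w m).out) ∈ genCoBuchi (Fin n) := by
  simp only [resRun_resolver]
  by_cases hconst : ∃ N, ∀ m ≥ N, (watchTrace w (m + 1)).2 = (watchTrace w m).2
  · obtain ⟨N, hN⟩ := hconst
    refine ⟨(watchTrace w N).2, N, fun m hm hmem => ?_⟩
    rw [← eq_of_le_of_succ_eq (f := fun k => (watchTrace w k).2) (fun k hk _ => hN k hk) hm]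
      at hmem
    exact watchTrace_succ_ne_of_mem_out w hn hmem (hN m hm)
  · push Not at hconst
    simp only [recurrentSquares, Set.mem_ofPred_eq, not_forall, not_frequently] at hw
    obtain ⟨u, hu⟩ := hw
    obtain ⟨N, hN⟩ := eventually_atTop.1 hu
    obtain ⟨m, hm, hmu, hne⟩ :=
      exists_ge_eq_and_succ_ne_of_cyclic (f := fun k => (watchTrace w k).2)
        (watchTrace_succ_eq_or w) hconst u (N + 1)
    obtain ⟨k, rfl⟩ : ∃ k, m = k + 1 := ⟨m - 1, by omega⟩
    exact (hN k (by omega) (hmu ▸ watchTrace_square w hne)).elim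

theorem lang (hn : 2 ≤ n) : (squareAut (Fin n)).Lang = (recurrentSquares (Fin n))ᶜ :=
  lang_subset.antisymm fun w hw => ⟨_, isRunFrom_resolver w, resolver_accepting hn hw⟩

theorem historyDeterministic (hn : 2 ≤ n) : (squareAut (Fin n)).HistoryDeterministic :=
  ⟨resolver, fun w => ⟨isRunFrom_resolver w, fun hw => resolver_accepting hn (lang_subset hw)⟩⟩

end squareAut

/-- there is a history-deterministic generalised coBüchi automaton
such that every history-deterministic generalised Büchi automaton recognising
the complement of its language has strictly more states. -/
theorem stmt_4 :
    ∃ (A : Type) (_ : Fintype A) (C : Type) (_ : Fintype C)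
      (M : Automaton A (Set C)),
      M.acc = genCoBuchi C ∧ M.HistoryDeterministic ∧
      ∀ (C' : Type) (_ : Fintype C') (B : Automaton A (Set C')),
        B.acc = genBuchi C' → B.HistoryDeterministic → B.Lang = M.Langᶜ →
        M.size < B.size := by
  refine ⟨Fin 3, inferInstance, Fin 3, inferInstance, squareAut (Fin 3), rfl,
    squareAut.historyDeterministic (by norm_num), fun C' _ B hacc _ hB => ?_⟩
  rw [squareAut.lang (by norm_num), compl_compl] at hB
  rw [squareAut.size]
  exact two_lt_size_of_lang_eq_recurrentSquares le_rfl B hacc hB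
end

section
/- Let L ⊆ Σ^ω be a prefix-independent language and let A be a nice history-deterministic coBüchi automaton recognising L, with safe components (S₁,Δ₁),…,(S_k,Δ_k), and set n_max = max_{1≤i≤k} |S_i|. Let B be the generalised coBüchi automaton with state set P = {p₁,…,p_{n_max}}, initial state p₁, transition set Δ = P×Σ×P, colour set {1,…,k} and acceptance condition genCoBuchi({1,…,k}), whose colouring is defined as follows: for each i ∈ {1,…,k} fix an injective morphism of automaton structures φ_i : (S_i,Δ_i) → (P,Δ) (one exists since |S_i| ≤ n_max and Δ is the full transition set), and set col(e) = {i : e is not the image under φ_i of any transition of Δ_i}. Then B is history-deterministic and L(B) = L. -/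
private lemma choose_eq_of_prop_eq {α : Sort*} {P Q : α → Prop} (hP : ∃ a, P a)
    (hQ : ∃ a, Q a) (h : P = Q) : Classical.choose hP = Classical.choose hQ := by
  subst h; rfl

private lemma wordAppend_single_zero {A : Type} (a : A) (w : ℕ → A) :
    wordAppend [a] w 0 = a := by simp [wordAppend]

private lemma wordAppend_single_succ {A : Type} (a : A) (w : ℕ → A) (n : ℕ) :
    wordAppend [a] w (n+1) = w n := by simp [wordAppend]

private lemma langFrom_step {A : Type} (M : Automaton A (Set Unit))
    (hacc : M.acc = genCoBuchi Unit) (hsd : M.SemanticallyDeterministic)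
    (t : AutTrans M.Q A (Set Unit)) (ht : t ∈ M.delta) :
    M.LangFrom t.dst = residualLang [t.lab] (M.LangFrom t.src) := by
  ext w
  constructor
  · rintro ⟨ρ', ⟨hsrc, hstep⟩, hac⟩
    refine ⟨fun n => Nat.casesOn n t (fun m => ρ' m), ⟨rfl, ?_⟩, ?_⟩
    · intro n
      cases n with
      | zero =>
        exact ⟨ht, (wordAppend_single_zero t.lab w).symm, hsrc.symm⟩
      | succ m =>
        refine ⟨(hstep m).1, ?_, (hstep m).2.2⟩
        rw [(hstep m).2.1, wordAppend_single_succ]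
    · rw [hacc] at hac ⊢
      obtain ⟨c, N, hN⟩ := hac
      refine ⟨c, N+1, fun m hm => ?_⟩
      cases m with
      | zero => omega
      | succ m'' => exact hN m'' (by omega)
  · rintro ⟨ρ, ⟨hsrc, hstep⟩, hac⟩
    have h0 : ρ 0 ∈ M.delta := (hstep 0).1
    have hlab0 : t.lab = (ρ 0).lab := by
      rw [(hstep 0).2.1, wordAppend_single_zero]
    have heq := hsd t ht (ρ 0) h0 (by rw [hsrc]) hlab0
    rw [heq]
    refine ⟨fun n => ρ (n+1), ⟨((hstep 0).2.2).symm, ?_⟩, ?_⟩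
    · intro n
      refine ⟨(hstep (n+1)).1, ?_, (hstep (n+1)).2.2⟩
      rw [(hstep (n+1)).2.1, wordAppend_single_succ]
    · rw [hacc] at hac ⊢
      obtain ⟨c, N, hN⟩ := hac
      exact ⟨c, N, fun m hm => hN (m+1) (by omega)⟩

private lemma langFrom_eq_of_reach {A : Type} (M : Automaton A (Set Unit))
    (hacc : M.acc = genCoBuchi Unit) (hsd : M.SemanticallyDeterministic)
    {L : Set (ℕ → A)} (hpi : PrefixIndependent L) (hlang : M.Lang = L)
    {q : M.Q} (hq : M.Reach M.init q) : M.LangFrom q = L := by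
  induction hq with
  | refl => exact hlang
  | tail _ hstep ih =>
    obtain ⟨t, ht, hsrc, hdst⟩ := hstep
    rw [← hdst, langFrom_step M hacc hsd t ht, hsrc, ih, hpi]

private lemma mem_of_shift_mem {A : Type} {L : Set (ℕ → A)}
    (hpi : PrefixIndependent L) (w : ℕ → A) (N : ℕ)
    (h : (fun n => w (N + n)) ∈ L) : w ∈ L := by
  set u : List A := List.ofFn fun i : Fin N => w i with hu
  have hw : wordAppend u (fun n => w (N + n)) = w := by
    funext n
    simp only [wordAppend, hu, List.length_ofFn]
    split
    · next hn => simp [hu, List.getElem_ofFn]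
    · next hn => congr 1; omega
  have h2 : (fun n => w (N + n)) ∈ residualLang u L := by rw [hpi]; exact h
  have h3 : wordAppend u (fun n => w (N + n)) ∈ L := h2
  rwa [hw] at h3

private lemma ofFn_dropLast {A : Type} (w : ℕ → A) (n : ℕ) :
    (List.ofFn fun i : Fin (n+2) => w i).dropLast = (List.ofFn fun i : Fin (n+1) => w i) := by
  rw [List.ofFn_succ', List.concat_eq_append, List.dropLast_concat]
  simp

private lemma ofFn_getLastD {A : Type} (w : ℕ → A) (a0 : A) (n : ℕ) :
    (List.ofFn fun i : Fin (n+1) => w i).getLastD a0 = w n := by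
  rw [List.ofFn_succ']
  simp [List.getLastD_eq_getLast?, List.getLast?_concat]

/-- correctness, prefix-independent case: superimposing the safe
components of a nice HD coBüchi automaton for a prefix-independent language `L`
on a full automaton with `n_max` states, colouring a transition with colour `i`
iff it is not the image of a transition of the `i`-th safe component, yields a
history-deterministic generalised coBüchi automaton recognising `L`. -/
theorem stmt_5 {A : Type} (L : Set (ℕ → A)) (hpi : PrefixIndependent L)
    (M : Automaton A (Set Unit)) (hacc : M.acc = genCoBuchi Unit)
    (hnice : M.Nice) (hhd : M.HistoryDeterministic) (hlang : M.Lang = L)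
    (k : ℕ) (S : Fin k → Set M.Q) (D : Fin k → Set (AutTrans M.Q A (Set Unit)))
    (hcomp : ∀ i, M.IsSafeComponent (S i) (D i))
    (hall : ∀ (S' : Set M.Q) (D' : Set (AutTrans M.Q A (Set Unit))),
      M.IsSafeComponent S' D' → ∃ i, S i = S' ∧ D i = D')
    (nmax : ℕ) (hub : ∀ i, (S i).ncard ≤ nmax) (hex : ∃ i, (S i).ncard = nmax)
    (p1 : Fin nmax) (φ : Fin k → M.Q → Fin nmax)
    (hinj : ∀ i, Set.InjOn (φ i) (S i)) :
    let B : Automaton A (Set (Fin k)) :=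
      { Q := Fin nmax,
        fin := inferInstance,
        init := p1,
        delta := {t | t.out = {i | ¬ ∃ s ∈ D i,
          φ i s.src = t.src ∧ s.lab = t.lab ∧ φ i s.dst = t.dst}},
        acc := genCoBuchi (Fin k) }
    B.HistoryDeterministic ∧ B.Lang = L := by
  classical
  intro B
  obtain ⟨hreach, hsd, hnf, _⟩ := hnice
  obtain ⟨rM, hrM⟩ := hhd
  set a0 : A := (rM []).lab with ha0
  have hLq : ∀ q : M.Q, M.LangFrom q = L := fun q =>
    langFrom_eq_of_reach M hacc hsd hpi hlang (hreach q)
  have hD : ∀ i, D i = {t | t ∈ M.delta ∧ t.src ∈ S i ∧ t.dst ∈ S i ∧ () ∉ t.out} :=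
    fun i => (hcomp i).2
  have hconn_refl : ∀ q, M.SafeConn q q := fun _ =>
    ⟨Relation.ReflTransGen.refl, Relation.ReflTransGen.refl⟩
  have hconn_symm : ∀ {p q : M.Q}, M.SafeConn p q → M.SafeConn q p := fun h => ⟨h.2, h.1⟩
  have hconn_trans : ∀ {p q r : M.Q}, M.SafeConn p q → M.SafeConn q r → M.SafeConn p r :=
    fun h1 h2 => ⟨h1.1.trans h2.1, h2.2.trans h1.2⟩
  have hcompEq : ∀ {p q : M.Q}, M.SafeConn p q → M.safeComponentOf p = M.safeComponentOf q := by
    intro p q h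
    ext x
    exact ⟨fun hx => hconn_trans hx h, fun hx => hconn_trans hx (hconn_symm h)⟩
  have hC : ∀ q : M.Q, ∃ i, S i = M.safeComponentOf q := by
    intro q
    obtain ⟨i, h1, _⟩ := hall (M.safeComponentOf q)
      {t | t ∈ M.delta ∧ t.src ∈ M.safeComponentOf q ∧ t.dst ∈ M.safeComponentOf q ∧ () ∉ t.out}
      ⟨⟨q, rfl⟩, rfl⟩
    exact ⟨i, h1⟩
  set c : M.Q → Fin k := fun q => Classical.choose (hC q) with hcdef
  have hSc : ∀ q, S (c q) = M.safeComponentOf q := fun q => Classical.choose_spec (hC q)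
  have hceq : ∀ {p q : M.Q}, M.SafeConn p q → c p = c q := by
    intro p q h
    exact choose_eq_of_prop_eq (hC p) (hC q) (by funext i; rw [hcompEq h])
  set ψ : M.Q → Fin nmax := fun q => φ (c q) q with hψdef
  have hmemD : ∀ t ∈ M.delta, () ∉ t.out → ∀ q : M.Q, M.SafeConn t.src q → t ∈ D (c q) := by
    intro t ht hsafe q hcq
    rw [hD]
    refine ⟨ht, ?_, ?_, hsafe⟩
    · rw [hSc]; exact hcq
    · rw [hSc]; exact hconn_trans (hconn_symm (hnf t ht hsafe)) hcq
  set rB : List A → AutTrans (Fin nmax) A (Set (Fin k)) := fun u =>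
    { src := if u.length ≤ 1 then p1 else ψ ((rM u.dropLast).dst),
      lab := u.getLastD a0,
      out := {i | ¬ ∃ s ∈ D i,
        φ i s.src = (if u.length ≤ 1 then p1 else ψ ((rM u.dropLast).dst)) ∧
        s.lab = u.getLastD a0 ∧ φ i s.dst = ψ ((rM u).dst)},
      dst := ψ ((rM u).dst) } with hrBdef
  -- basic computations on resRun of B
  have hsrc0 : ∀ w : ℕ → A, (B.resRun rB w 0).src = p1 := by
    intro w
    show (if (List.ofFn fun i : Fin 1 => w i).length ≤ 1 then p1
      else ψ ((rM (List.ofFn fun i : Fin 1 => w i).dropLast).dst)) = p1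
    rw [if_pos (by simp)]
  have hsrcS : ∀ (w : ℕ → A) (n : ℕ),
      (B.resRun rB w (n+1)).src = ψ ((M.resRun rM w n).dst) := by
    intro w n
    show (if (List.ofFn fun i : Fin (n+2) => w i).length ≤ 1 then p1
      else ψ ((rM (List.ofFn fun i : Fin (n+2) => w i).dropLast).dst))
      = ψ ((M.resRun rM w n).dst)
    rw [if_neg (by simp), ofFn_dropLast]
    rfl
  have hlabB : ∀ (w : ℕ → A) (n : ℕ), (B.resRun rB w n).lab = w n := by
    intro w n
    show (List.ofFn fun i : Fin (n+1) => w i).getLastD a0 = w n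
    exact ofFn_getLastD w a0 n
  have hdstB : ∀ (w : ℕ → A) (n : ℕ),
      (B.resRun rB w n).dst = ψ ((M.resRun rM w n).dst) := fun _ _ => rfl
  have houtB : ∀ (w : ℕ → A) (n : ℕ),
      (B.resRun rB w n).out = {i | ¬ ∃ s ∈ D i,
        φ i s.src = (B.resRun rB w n).src ∧ s.lab = (B.resRun rB w n).lab ∧
        φ i s.dst = (B.resRun rB w n).dst} := fun _ _ => rfl
  have hBdelta : ∀ (w : ℕ → A) (n : ℕ), B.resRun rB w n ∈ B.delta := fun w n => houtB w n
  have hBrun : ∀ w : ℕ → A, B.IsRunFrom B.init w (B.resRun rB w) := by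
    intro w
    refine ⟨hsrc0 w, fun n => ⟨hBdelta w n, hlabB w n, ?_⟩⟩
    rw [hdstB w n, hsrcS w n]
  -- acceptance of the resolver run on words of L
  have hBacc : ∀ w ∈ L, (fun n => (B.resRun rB w n).out) ∈ genCoBuchi (Fin k) := by
    intro w hw
    have hwM : w ∈ M.Lang := by rw [hlang]; exact hw
    have hac := (hrM w).2 hwM
    rw [hacc] at hac
    obtain ⟨_, N, hN⟩ := hac
    have htdelta : ∀ n, M.resRun rM w n ∈ M.delta := fun n => ((hrM w).1.2 n).1
    have htlab : ∀ n, (M.resRun rM w n).lab = w n := fun n => ((hrM w).1.2 n).2.1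
    have htlink : ∀ n, (M.resRun rM w n).dst = (M.resRun rM w (n+1)).src :=
      fun n => ((hrM w).1.2 n).2.2
    set r0 : M.Q := (M.resRun rM w (N+1)).src with hr0
    set i : Fin k := c r0 with hidef
    have hconn : ∀ n, N + 1 ≤ n → M.SafeConn r0 (M.resRun rM w n).src := by
      intro n hn
      induction n, hn using Nat.le_induction with
      | base => exact hconn_refl r0
      | succ n hn ih =>
        have h1 : M.SafeConn (M.resRun rM w n).src (M.resRun rM w n).dst :=
          hnf (M.resRun rM w n) (htdelta n) (hN n (by omega))
        rw [htlink n] at h1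
        exact hconn_trans ih h1
    refine ⟨i, N + 1, fun m hm => ?_⟩
    obtain ⟨m', rfl⟩ : ∃ m', m = m' + 1 := ⟨m - 1, by omega⟩
    have hsafem : () ∉ (M.resRun rM w (m'+1)).out := hN (m'+1) (by omega)
    have hconnm : M.SafeConn r0 (M.resRun rM w (m'+1)).src := hconn (m'+1) hm
    have hconnd : M.SafeConn r0 (M.resRun rM w (m'+1)).dst :=
      hconn_trans hconnm (hnf _ (htdelta (m'+1)) hsafem)
    intro hcon
    have hcon' : i ∈ (B.resRun rB w (m'+1)).out := hcon
    rw [houtB] at hcon'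
    have hpsi : ∀ x : M.Q, M.SafeConn r0 x → φ i x = ψ x := by
      intro x hx
      show φ i x = φ (c x) x
      rw [hidef, hceq (hconn_symm hx)]
    refine hcon' ⟨M.resRun rM w (m'+1),
      hmemD _ (htdelta (m'+1)) hsafem r0 (hconn_symm hconnm), ?_, ?_, ?_⟩
    · rw [hsrcS w m', ← htlink m']
      exact hpsi _ (by rw [htlink m']; exact hconnm)
    · rw [hlabB, htlab]
    · rw [hdstB]
      exact hpsi _ hconnd
  -- B.Lang ⊆ L
  have hBL : B.Lang ⊆ L := by
    rintro w ⟨ρ, ⟨hρ0, hρstep⟩, haccB⟩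
    obtain ⟨i, N, hN⟩ := haccB
    have hex' : ∀ n : ℕ, ∃ s ∈ D i,
        φ i s.src = (ρ (N+n)).src ∧ s.lab = (ρ (N+n)).lab ∧ φ i s.dst = (ρ (N+n)).dst := by
      intro n
      have h1 : i ∉ (ρ (N+n)).out := hN (N+n) (by omega)
      have h2 : (ρ (N+n)).out = {j | ¬ ∃ s ∈ D j,
          φ j s.src = (ρ (N+n)).src ∧ s.lab = (ρ (N+n)).lab ∧ φ j s.dst = (ρ (N+n)).dst} :=
        (hρstep (N+n)).1
      rw [h2] at h1
      exact not_not.mp h1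
    choose s hsD hs1 hs2 hs3 using hex'
    have hsS : ∀ n, (s n) ∈ M.delta ∧ (s n).src ∈ S i ∧ (s n).dst ∈ S i ∧ () ∉ (s n).out := by
      intro n
      have := hsD n
      rwa [hD] at this
    have hlink : ∀ n, (s n).dst = (s (n+1)).src := by
      intro n
      apply hinj i (hsS n).2.2.1 (hsS (n+1)).2.1
      rw [hs3 n, hs1 (n+1)]
      have h4 : (ρ (N+n)).dst = (ρ (N+n+1)).src := (hρstep (N+n)).2.2
      rw [h4]
      congr 1
    have hw' : (fun n => w (N + n)) ∈ M.LangFrom (s 0).src := by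
      refine ⟨s, ⟨rfl, fun n => ⟨(hsS n).1, ?_, hlink n⟩⟩, ?_⟩
      · rw [hs2 n, (hρstep (N+n)).2.1]
      · rw [hacc]
        exact ⟨(), 0, fun m _ => (hsS m).2.2.2⟩
    rw [hLq] at hw'
    exact mem_of_shift_mem hpi w N hw'
  have hLB : L ⊆ B.Lang := fun w hw => ⟨B.resRun rB w, hBrun w, hBacc w hw⟩
  have hLangB : B.Lang = L := Set.Subset.antisymm hBL hLB
  refine ⟨⟨rB, fun w => ⟨hBrun w, fun hwB => hBacc w ?_⟩⟩, hLangB⟩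
  rw [← hLangB]
  exact hwB
end

section
/- Let L ⊆ Σ^ω be a prefix-independent language and let A_min be a nice, safe minimal and safe centralised history-deterministic coBüchi automaton recognising L; let n_max be the maximal number of states of a safe component of A_min. Then every history-deterministic generalised coBüchi automaton recognising L has at least n_max states. -/
/-!
Suppose `B` has fewer states than a safe component `S` of `A_min`. By prefix-independence every
state of `A_min` recognises `L`, so safe minimality makes the safe languages of the states of `S`
pairwise distinct, and with safe centralisation a state `top ∈ S` of maximal safe language is
separated from every other state `r` by a finite word that is safe from `top` but not from `r`.
Such words assemble into a synchronising safe loop at `top`: every safe path reading it ends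
in `top`.

An infinite word, safe from `top` and hence in `L`, is built round by round against a resolver
for `B`: round `i` synchronises in `top`, moves to the `i`-th state `p` of `S` (cyclically),
where the resolver is in some state `b`, plays a word safe from `p` but not from the next target
`q` of the pair `(p, b)`, and returns to `top`. Since `|B| < |S|`, two distinct states `p, q ∈ S`
meet the same resolver state `b` infinitely often; say some word is safe from `p` but not from
`q`. Pumping the segment between a round at `(p, b)` targeting `q` (late enough that the resolver
run no longer sees its missing colour) and a later round at `(q, b)` gives a word accepted by `B`,
so in `L`. But in it every period brings `A_min` to `q` and then plays a word that is not safe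
from `q`, so it has no safe suffix, which is impossible for a word accepted by the coBüchi
automaton `A_min`.
-/

section Words

variable {α : Type}

def wordPrefix (w : ℕ → α) (m : ℕ) : List α := List.ofFn fun i : Fin m => w i

@[simp] lemma length_wordPrefix (w : ℕ → α) (m : ℕ) : (wordPrefix w m).length = m := by
  simp [wordPrefix]

@[simp] lemma getElem_wordPrefix (w : ℕ → α) {m i : ℕ} (h : i < (wordPrefix w m).length) :
    (wordPrefix w m)[i] = w i := by
  simp [wordPrefix]

lemma wordPrefix_succ (w : ℕ → α) (m : ℕ) :
    wordPrefix w (m + 1) = wordPrefix w m ++ [w m] := by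
  simpa [wordPrefix] using List.ofFn_succ' (n := m) (f := fun i : Fin (m + 1) => w i)

@[simp] lemma wordAppend_singleton_zero (a : α) (w : ℕ → α) : wordAppend [a] w 0 = a := by
  simp [wordAppend]

@[simp] lemma wordAppend_singleton_succ (a : α) (w : ℕ → α) (n : ℕ) :
    wordAppend [a] w (n + 1) = w n := by
  simp [wordAppend]

def OccursAt (w : ℕ → α) (j : ℕ) (f : List α) : Prop :=
  ∀ i (h : i < f.length), w (j + i) = f[i]

lemma OccursAt.append {w : ℕ → α} {j : ℕ} {f g : List α} (hf : OccursAt w j f)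
    (hg : OccursAt w (j + f.length) g) : OccursAt w j (f ++ g) := by
  intro i hi
  rw [List.getElem_append]
  split_ifs with h
  · exact hf i h
  · rw [← hg (i - f.length) (by simp at hi; omega)]
    congr 1
    omega

lemma OccursAt.left {w : ℕ → α} {j : ℕ} {f g : List α} (h : OccursAt w j (f ++ g)) :
    OccursAt w j f := fun i hi => by
  rw [h i (by simp; omega), List.getElem_append_left hi]

end Words

lemma tail_mem_genCoBuchi_iff {C : Type} {f : ℕ → Set C} :
    (fun n => f (n + 1)) ∈ genCoBuchi C ↔ f ∈ genCoBuchi C := by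
  constructor
  · rintro ⟨c, n, h⟩
    refine ⟨c, n + 1, fun m hm => ?_⟩
    obtain ⟨k, rfl⟩ : ∃ k, m = k + 1 := ⟨m - 1, by omega⟩
    exact h k (by omega)
  · rintro ⟨c, n, h⟩
    exact ⟨c, n, fun m hm => h (m + 1) (by omega)⟩

section Pumping

variable {α : Type}

/-- The index map of the ultimately periodic word `w[0, μ) · (w[μ, μ + ℓ))^ω`. -/
def pumpIndex (μ ℓ m : ℕ) : ℕ := if m < μ then m else μ + (m - μ) % ℓ

def pumpWord (w : ℕ → α) (μ ℓ : ℕ) : ℕ → α := fun m => w (pumpIndex μ ℓ m)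

variable {μ ℓ : ℕ}

lemma pumpIndex_of_lt {m : ℕ} (hm : m < μ + ℓ) : pumpIndex μ ℓ m = m := by
  unfold pumpIndex
  split_ifs with h
  · rfl
  · rw [Nat.mod_eq_of_lt (by omega)]
    omega

lemma pumpIndex_add_period {m : ℕ} (hm : μ ≤ m) :
    pumpIndex μ ℓ (m + ℓ) = pumpIndex μ ℓ m := by
  unfold pumpIndex
  rw [if_neg (by omega), if_neg (by omega), show m + ℓ - μ = m - μ + ℓ by omega,
    Nat.add_mod_right]

lemma le_pumpIndex {n m : ℕ} (hn : n ≤ μ) (hm : n ≤ m) : n ≤ pumpIndex μ ℓ m := by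
  unfold pumpIndex
  split_ifs <;> omega

lemma pumpIndex_succ (hℓ : 0 < ℓ) (m : ℕ) :
    pumpIndex μ ℓ (m + 1) = pumpIndex μ ℓ m + 1 ∨
      pumpIndex μ ℓ m + 1 = μ + ℓ ∧ pumpIndex μ ℓ (m + 1) = μ := by
  unfold pumpIndex
  rcases lt_or_ge m μ with h | h
  · rw [if_pos h]
    split_ifs with h'
    · exact Or.inl rfl
    · left
      rw [show m + 1 - μ = 0 by omega, Nat.zero_mod]
      omega
  rw [if_neg (by omega), if_neg (by omega), show m + 1 - μ = m - μ + 1 by omega,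
    ← Nat.mod_add_mod]
  have := Nat.mod_lt (m - μ) hℓ
  rcases Nat.lt_or_ge ((m - μ) % ℓ + 1) ℓ with h' | h'
  · left
    rw [Nat.mod_eq_of_lt h', Nat.add_assoc]
  · right
    rw [show (m - μ) % ℓ + 1 = ℓ by omega, Nat.mod_self]
    omega

lemma pumpWord_add_mul (w : ℕ → α) {m : ℕ} (hm : μ ≤ m) (c : ℕ) :
    pumpWord w μ ℓ (m + c * ℓ) = pumpWord w μ ℓ m := by
  induction c with
  | zero => simp
  | succ c ih =>
    rw [Nat.succ_mul, ← Nat.add_assoc, ← ih]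
    exact congrArg w (pumpIndex_add_period (by omega))

lemma occursAt_pumpWord {w : ℕ → α} {j : ℕ} {f : List α} (h : OccursAt w j f)
    (hj : j + f.length ≤ μ + ℓ) : OccursAt (pumpWord w μ ℓ) j f := fun i hi => by
  rw [← h i hi]
  exact congrArg w (pumpIndex_of_lt (by omega))

lemma occursAt_pumpWord_add_mul {w : ℕ → α} {j : ℕ} {f : List α}
    (h : OccursAt (pumpWord w μ ℓ) j f) (hj : μ ≤ j) (c : ℕ) :
    OccursAt (pumpWord w μ ℓ) (j + c * ℓ) f := fun i hi => by
  rw [← h i hi, ← pumpWord_add_mul w (m := j + i) (by omega) c]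
  congr 1
  ring

end Pumping

namespace Automaton

variable {A Γ : Type}

lemma IsRunFrom.pumpWord {M : Automaton A Γ} {q : M.Q} {w : ℕ → A}
    {ρ : ℕ → AutTrans M.Q A Γ} (hρ : M.IsRunFrom q w ρ) {μ ℓ : ℕ} (hℓ : 0 < ℓ)
    (hloop : (ρ (μ + ℓ)).src = (ρ μ).src) :
    M.IsRunFrom q (pumpWord w μ ℓ) (pumpWord ρ μ ℓ) := by
  refine ⟨?_, fun n => ⟨(hρ.2 _).1, (hρ.2 _).2.1, ?_⟩⟩
  · simp only [_root_.pumpWord, pumpIndex_of_lt (show 0 < μ + ℓ by omega), hρ.1]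
  · simp only [_root_.pumpWord]
    rcases pumpIndex_succ hℓ n with h | ⟨hend, h⟩
    · rw [h]
      exact (hρ.2 _).2.2
    · rw [h, ← hloop, ← hend]
      exact (hρ.2 _).2.2

theorem pumpWord_mem_langFrom {C : Type} {B : Automaton A (Set C)}
    (hacc : B.acc = genCoBuchi C) {q : B.Q} {w : ℕ → A} {ρ : ℕ → AutTrans B.Q A (Set C)}
    (hρ : B.IsRunFrom q w ρ) {c : C} {n μ ℓ : ℕ} (hc : ∀ m, n ≤ m → c ∉ (ρ m).out)
    (hn : n ≤ μ) (hℓ : 0 < ℓ) (hloop : (ρ (μ + ℓ)).src = (ρ μ).src) :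
    pumpWord w μ ℓ ∈ B.LangFrom q :=
  ⟨_, hρ.pumpWord hℓ hloop, hacc ▸ ⟨c, n, fun _ hm => hc _ (le_pumpIndex hn hm)⟩⟩

section GenCoBuchi

variable {C : Type} {M : Automaton A (Set C)}

lemma cons_mem_langFrom (hacc : M.acc = genCoBuchi C) {t : AutTrans M.Q A (Set C)}
    (ht : t ∈ M.delta) {w : ℕ → A} (hw : w ∈ M.LangFrom t.dst) :
    wordAppend [t.lab] w ∈ M.LangFrom t.src := by
  obtain ⟨ρ, hρ, hρacc⟩ := hw
  refine ⟨fun n => Nat.casesOn n t ρ, ⟨rfl, fun n => ?_⟩, ?_⟩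
  · cases n with
    | zero => exact ⟨ht, rfl, hρ.1.symm⟩
    | succ k => simpa using hρ.2 k
  · rw [hacc] at hρacc ⊢
    exact tail_mem_genCoBuchi_iff.mp hρacc

lemma exists_mem_langFrom_of_cons_mem (hacc : M.acc = genCoBuchi C) {q : M.Q} {a : A}
    {w : ℕ → A} (h : wordAppend [a] w ∈ M.LangFrom q) :
    ∃ t ∈ M.delta, t.src = q ∧ t.lab = a ∧ w ∈ M.LangFrom t.dst := by
  obtain ⟨ρ, hρ, hρacc⟩ := h
  refine ⟨ρ 0, (hρ.2 0).1, hρ.1, by simpa using (hρ.2 0).2.1, fun n => ρ (n + 1),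
    ⟨(hρ.2 0).2.2.symm, fun n => by simpa using hρ.2 (n + 1)⟩, ?_⟩
  rw [hacc] at hρacc ⊢
  exact tail_mem_genCoBuchi_iff.mpr hρacc

theorem langFrom_eq_of_prefixIndependent {L : Set (ℕ → A)} (hpi : PrefixIndependent L)
    (hacc : M.acc = genCoBuchi C) (hreach : ∀ q, M.Reach M.init q)
    (hsd : M.SemanticallyDeterministic) (hlang : M.Lang = L) (q : M.Q) :
    M.LangFrom q = L := by
  induction hreach q with
  | refl => exact hlang
  | tail _ hstep ih =>
    obtain ⟨t, ht, rfl, rfl⟩ := hstep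
    ext w
    have hL : wordAppend [t.lab] w ∈ L ↔ w ∈ L := Set.ext_iff.mp (hpi [t.lab]) w
    refine ⟨fun hw => hL.mp (ih ▸ cons_mem_langFrom hacc ht hw), fun hw => ?_⟩
    obtain ⟨t', ht', hsrc, hlab, hw'⟩ :=
      exists_mem_langFrom_of_cons_mem hacc (ih.symm ▸ hL.mpr hw)
    rwa [hsd t' ht' t ht hsrc hlab] at hw'

end GenCoBuchi

section CoBuchi

variable {M : Automaton A (Set Unit)}

def SafePath (M : Automaton A (Set Unit)) : M.Q → List A → M.Q → Prop
  | p, [], q => p = q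
  | p, a :: u, q =>
    ∃ t ∈ M.delta, () ∉ t.out ∧ t.src = p ∧ t.lab = a ∧ SafePath M t.dst u q

def SafeReadable (M : Automaton A (Set Unit)) (p : M.Q) (u : List A) : Prop :=
  ∃ q, M.SafePath p u q

def SafeSeparates (M : Automaton A (Set Unit)) (p q : M.Q) : Prop :=
  ∃ u, M.SafeReadable p u ∧ ¬ M.SafeReadable q u

@[simp] lemma safePath_nil {p q : M.Q} : M.SafePath p [] q ↔ p = q := Iff.rfl

lemma safePath_append {p r : M.Q} {u v : List A} :
    M.SafePath p (u ++ v) r ↔ ∃ q, M.SafePath p u q ∧ M.SafePath q v r := by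
  induction u generalizing p with
  | nil => simp
  | cons a u ih =>
    simp only [List.cons_append, SafePath, ih]
    constructor
    · rintro ⟨t, ht, hs, hsrc, hlab, q, h₁, h₂⟩
      exact ⟨q, ⟨t, ht, hs, hsrc, hlab, h₁⟩, h₂⟩
    · rintro ⟨q, ⟨t, ht, hs, hsrc, hlab, h₁⟩, h₂⟩
      exact ⟨t, ht, hs, hsrc, hlab, q, h₁, h₂⟩

lemma SafePath.append {p q r : M.Q} {u v : List A} (h₁ : M.SafePath p u q)
    (h₂ : M.SafePath q v r) : M.SafePath p (u ++ v) r :=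
  safePath_append.mpr ⟨q, h₁, h₂⟩

lemma SafePath.unique (hdet : M.SafeDeterministic) {p q q' : M.Q} {u : List A}
    (h : M.SafePath p u q) (h' : M.SafePath p u q') : q = q' := by
  induction u generalizing p with
  | nil => exact h.symm.trans h'
  | cons a u ih =>
    obtain ⟨t, ht, hs, hsrc, hlab, htail⟩ := h
    obtain ⟨t', ht', hs', hsrc', hlab', htail'⟩ := h'
    obtain rfl := hdet t ht t' ht' hs hs' (hsrc.trans hsrc'.symm) (hlab.trans hlab'.symm)
    exact ih htail htail'

lemma SafeReadable.of_prefix {p : M.Q} {u v : List A} (h : u <+: v)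
    (hv : M.SafeReadable p v) : M.SafeReadable p u := by
  obtain ⟨w, rfl⟩ := h
  obtain ⟨r, hr⟩ := hv
  obtain ⟨q, hq, -⟩ := safePath_append.mp hr
  exact ⟨q, hq⟩

lemma IsRunFrom.safePath_of_occursAt {q : M.Q} {w : ℕ → A}
    {ρ : ℕ → AutTrans M.Q A (Set Unit)} (hρ : M.IsRunFrom q w ρ) {f : List A} :
    ∀ {j : ℕ}, OccursAt w j f → (∀ i < f.length, () ∉ (ρ (j + i)).out) →
      M.SafePath (ρ j).src f (ρ (j + f.length)).src := by
  induction f with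
  | nil => intro j _ _; rfl
  | cons a f ih =>
    intro j hf hsafe
    refine ⟨ρ j, (hρ.2 j).1, by simpa using hsafe 0, rfl,
      by simpa [(hρ.2 j).2.1] using hf 0, ?_⟩
    rw [(hρ.2 j).2.2, show j + (a :: f).length = j + 1 + f.length by simp; omega]
    refine ih (fun i hi => ?_) (fun i hi => ?_)
    · rw [show j + 1 + i = j + (i + 1) by omega]
      exact hf (i + 1) (by simpa using hi)
    · rw [show j + 1 + i = j + (i + 1) by omega]
      exact hsafe (i + 1) (by simpa using hi)

theorem mem_safeLang_iff (hdet : M.SafeDeterministic) {p : M.Q} {w : ℕ → A} :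
    w ∈ M.SafeLang p ↔ ∀ m, M.SafeReadable p (wordPrefix w m) := by
  constructor
  · rintro ⟨ρ, hρ, hsafe⟩ m
    have h := hρ.safePath_of_occursAt (j := 0) (f := wordPrefix w m)
      (fun i hi => by simp) (fun i _ => hsafe _)
    rw [hρ.1] at h
    exact ⟨_, h⟩
  · intro h
    choose pos hpos using h
    have hstep : ∀ m, M.SafePath (pos m) [w m] (pos (m + 1)) := fun m => by
      have h₁ := hpos (m + 1)
      rw [wordPrefix_succ] at h₁
      obtain ⟨q, hq, hq'⟩ := safePath_append.mp h₁
      rwa [hq.unique hdet (hpos m)] at hq'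
    choose ρ hρδ hρsafe hρsrc hρlab hρdst using hstep
    refine ⟨ρ, ⟨?_, fun n => ⟨hρδ n, hρlab n, ?_⟩⟩, hρsafe⟩
    · rw [hρsrc 0]
      exact (hpos 0).symm
    · rw [hρsrc (n + 1)]
      exact hρdst n

lemma safeLang_subset_of_not_safeSeparates (hdet : M.SafeDeterministic) {p q : M.Q}
    (h : ¬ M.SafeSeparates p q) : M.SafeLang p ⊆ M.SafeLang q := by
  intro w hw
  rw [mem_safeLang_iff hdet] at hw ⊢
  intro m
  by_contra hm
  exact h ⟨_, hw m, hm⟩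

lemma safeLang_subset_langFrom (hacc : M.acc = genCoBuchi Unit) (q : M.Q) :
    M.SafeLang q ⊆ M.LangFrom q :=
  fun _ ⟨ρ, hρ, hsafe⟩ => ⟨ρ, hρ, hacc ▸ ⟨(), 0, fun m _ => hsafe m⟩⟩

theorem not_mem_langFrom_of_occursAt (hacc : M.acc = genCoBuchi Unit) {f : List A}
    (hdead : ∀ r, ¬ M.SafeReadable r f) {w : ℕ → A}
    (hocc : ∀ n, ∃ j, n ≤ j ∧ OccursAt w j f) (q : M.Q) : w ∉ M.LangFrom q := by
  rintro ⟨ρ, hρ, hρacc⟩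
  rw [hacc] at hρacc
  obtain ⟨⟨⟩, n, hn⟩ := hρacc
  obtain ⟨j, hj, hf⟩ := hocc n
  exact hdead _ ⟨_, hρ.safePath_of_occursAt hf fun i _ => hn _ (by omega)⟩

lemma ncard_safePath_ends_le (hdet : M.SafeDeterministic) (P : Set M.Q) (u : List A) :
    {z | ∃ r ∈ P, M.SafePath r u z}.ncard ≤ P.ncard := by
  have := M.fin
  classical
  refine Set.ncard_le_ncard_of_injOn
    (fun z => if h : ∃ r ∈ P, M.SafePath r u z then h.choose else z) (fun z hz => ?_)
    (fun z₁ h₁ z₂ h₂ heq => ?_)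
  · have hz : ∃ r ∈ P, M.SafePath r u z := hz
    simp only [dif_pos hz]
    exact hz.choose_spec.1
  · simp only [dif_pos (show ∃ r ∈ P, M.SafePath r u z₁ from h₁),
      dif_pos (show ∃ r ∈ P, M.SafePath r u z₂ from h₂)] at heq
    exact h₁.choose_spec.2.unique hdet (heq ▸ h₂.choose_spec.2)

/-- Take a loop at `top` minimising the number of possible ends of safe paths reading it. If an
end `r ≠ top` remained, appending a word safe from `top` but not from `r`, and a way back to
`top`, would lose `r`. -/
theorem exists_synchronizing_loop (hdet : M.SafeDeterministic) {top : M.Q}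
    (hsep : ∀ r, r ≠ top → M.SafeSeparates top r)
    (hret : ∀ u z, M.SafePath top u z → ∃ v, M.SafePath z v top) :
    ∃ G, M.SafePath top G top ∧ ∀ r z, M.SafePath r G z → z = top := by
  have := M.fin
  classical
  let ends : List A → Set M.Q := fun G => {z | ∃ r, M.SafePath r G z}
  have hex : ∃ n, ∃ G, M.SafePath top G top ∧ (ends G).ncard = n := ⟨_, [], rfl, rfl⟩
  obtain ⟨G, hG, hcard⟩ := Nat.find_spec hex
  refine ⟨G, hG, fun r z hz => ?_⟩
  by_contra hne
  obtain ⟨u, ⟨z', hu⟩, hzu⟩ := hsep z hne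
  obtain ⟨v, hv⟩ := hret u z' hu
  have hsub : ends (G ++ (u ++ v)) ⊆ {y | ∃ m ∈ ends G \ {z}, M.SafePath m (u ++ v) y} := by
    rintro y ⟨r', hr'⟩
    obtain ⟨m, hm, hm'⟩ := safePath_append.mp hr'
    refine ⟨m, ⟨⟨r', hm⟩, ?_⟩, hm'⟩
    rintro rfl
    obtain ⟨y', hy', -⟩ := safePath_append.mp hm'
    exact hzu ⟨y', hy'⟩
  have hlt : (ends (G ++ (u ++ v))).ncard < Nat.find hex :=
    calc _ ≤ _ := Set.ncard_le_ncard hsub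
      _ ≤ (ends G \ {z}).ncard := ncard_safePath_ends_le hdet _ _
      _ < (ends G).ncard := Set.ncard_sdiff_singleton_lt_of_mem ⟨r, hz⟩
      _ = Nat.find hex := hcard
  exact Nat.find_min hex hlt ⟨_, hG.append (hu.append hv), rfl⟩

lemma SafePath.safeConn (hnf : M.NormalForm) {p q : M.Q} {u : List A}
    (h : M.SafePath p u q) : M.SafeConn p q := by
  induction u generalizing p with
  | nil =>
    obtain rfl : p = q := h
    exact ⟨.refl, .refl⟩
  | cons a u ih =>
    obtain ⟨t, ht, hs, rfl, -, htail⟩ := h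
    have h₁ := hnf t ht hs
    have h₂ := ih htail
    exact ⟨h₁.1.trans h₂.1, h₂.2.trans h₁.2⟩

lemma exists_safePath_of_reflTransGen {p q : M.Q}
    (h : Relation.ReflTransGen M.SafeStep p q) : ∃ u, M.SafePath p u q := by
  induction h with
  | refl => exact ⟨[], rfl⟩
  | tail _ hstep ih =>
    obtain ⟨u, hu⟩ := ih
    obtain ⟨t, ht, rfl, rfl, hs⟩ := hstep
    exact ⟨u ++ [t.lab], hu.append ⟨t, ht, hs, rfl, rfl, rfl⟩⟩

lemma mem_safeComponentOf_of_safePath (hnf : M.NormalForm) {s p q : M.Q} {u : List A}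
    (hp : p ∈ M.safeComponentOf s) (h : M.SafePath p u q) : q ∈ M.safeComponentOf s :=
  have hpq := h.safeConn hnf
  ⟨hpq.2.trans hp.1, hp.2.trans hpq.1⟩

lemma exists_safePath_of_mem_safeComponentOf {s p q : M.Q} (hp : p ∈ M.safeComponentOf s)
    (hq : q ∈ M.safeComponentOf s) : ∃ u, M.SafePath p u q :=
  exists_safePath_of_reflTransGen (hp.1.trans hq.2)

theorem exists_maximal_safeLang (hsm : M.SafeMinimal) (hsc : M.SafeCentralised)
    (hequiv : ∀ p q : M.Q, M.LangFrom p = M.LangFrom q) (s : M.Q) :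
    ∃ top ∈ M.safeComponentOf s, ∀ r, M.SafeLang top ⊆ M.SafeLang r → r = top := by
  have := M.fin
  obtain ⟨top, htop, hmax⟩ := (Set.toFinite (M.safeComponentOf s)).exists_maximalFor
    M.SafeLang _ ⟨s, .refl, .refl⟩
  refine ⟨top, htop, fun r hr => ?_⟩
  have hconn : M.SafeConn top r := hsc top r (hequiv _ _) (Or.inl hr)
  have hrs : r ∈ M.safeComponentOf s := ⟨hconn.2.trans htop.1, htop.2.trans hconn.1⟩
  exact (hsm top r (hequiv _ _) (le_antisymm hr (hmax hrs hr))).symm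

end CoBuchi

end Automaton

open Automaton

structure BoundViolation (A : Type) where
  M : Automaton A (Set Unit)
  acc : M.acc = genCoBuchi Unit
  safeDet : M.SafeDeterministic
  S : Set M.Q
  top : M.Q
  top_mem : top ∈ S
  mem_of_safePath {p q : M.Q} {u : List A} : p ∈ S → M.SafePath p u q → q ∈ S
  exists_safePath {p q : M.Q} : p ∈ S → q ∈ S → ∃ u, M.SafePath p u q
  safeLang_injOn : S.InjOn M.SafeLang
  eq_top_of_safeLang_subset {r : M.Q} : M.SafeLang top ⊆ M.SafeLang r → r = top
  C : Type
  B : Automaton A (Set C)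
  accB : B.acc = genCoBuchi C
  lang : B.Lang = M.LangFrom top
  resolver : List A → AutTrans B.Q A (Set C)
  isResolver : B.IsResolver resolver
  size_lt : B.size < S.ncard

namespace BoundViolation

variable {A : Type} (X : BoundViolation A)

lemma safeSeparates_top {r : X.M.Q} (hr : r ≠ X.top) : X.M.SafeSeparates X.top r := by
  by_contra h
  exact hr (X.eq_top_of_safeLang_subset (safeLang_subset_of_not_safeSeparates X.safeDet h))

lemma safeSeparates_or_safeSeparates {p q : X.M.Q} (hp : p ∈ X.S) (hq : q ∈ X.S)
    (hne : p ≠ q) : X.M.SafeSeparates p q ∨ X.M.SafeSeparates q p := by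
  by_contra! h
  exact hne (X.safeLang_injOn hp hq ((safeLang_subset_of_not_safeSeparates X.safeDet h.1).antisymm
    (safeLang_subset_of_not_safeSeparates X.safeDet h.2)))

lemma one_lt_ncard : 1 < X.S.ncard :=
  (Nat.succ_le_of_lt (@Fintype.card_pos _ X.B.fin ⟨(X.resolver []).src⟩)).trans_lt X.size_lt

lemma S_finite : X.S.Finite := by
  have := X.M.fin
  exact Set.toFinite _

open Classical in
noncomputable def pathWord (p q : X.M.Q) : List A :=
  if h : ∃ u, X.M.SafePath p u q then h.choose else []

lemma safePath_pathWord {p q : X.M.Q} (hp : p ∈ X.S) (hq : q ∈ X.S) :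
    X.M.SafePath p (X.pathWord p q) q := by
  have h := X.exists_safePath hp hq
  rw [pathWord, dif_pos h]
  exact h.choose_spec

open Classical in
/-- Rounds whose target `q` is not separated from `p` play the junk value `[]`; they are
harmless. -/
noncomputable def killWord (p q : X.M.Q) : List A :=
  if h : X.M.SafeSeparates p q then h.choose else []

lemma safeReadable_killWord (p q : X.M.Q) : X.M.SafeReadable p (X.killWord p q) := by
  unfold killWord
  split_ifs with h
  exacts [h.choose_spec.1, ⟨p, rfl⟩]

lemma not_safeReadable_killWord {p q : X.M.Q} (h : X.M.SafeSeparates p q) :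
    ¬ X.M.SafeReadable q (X.killWord p q) := by
  rw [killWord, dif_pos h]
  exact h.choose_spec.2

noncomputable def killEnd (p q : X.M.Q) : X.M.Q := (X.safeReadable_killWord p q).choose

lemma safePath_killWord (p q : X.M.Q) : X.M.SafePath p (X.killWord p q) (X.killEnd p q) :=
  (X.safeReadable_killWord p q).choose_spec

lemma exists_syncWord : ∃ G, G ≠ [] ∧ X.M.SafePath X.top G X.top ∧
    ∀ r z, X.M.SafePath r G z → z = X.top := by
  obtain ⟨G, hG, hsync⟩ := exists_synchronizing_loop X.safeDet (fun _ => X.safeSeparates_top)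
    fun _ _ h => X.exists_safePath (X.mem_of_safePath X.top_mem h) X.top_mem
  obtain ⟨r, -, hr⟩ := Set.exists_ne_of_one_lt_ncard X.one_lt_ncard X.top
  have hkill := X.not_safeReadable_killWord (X.safeSeparates_top hr)
  have hend := X.mem_of_safePath X.top_mem (X.safePath_killWord X.top r)
  refine ⟨X.killWord X.top r ++ X.pathWord (X.killEnd X.top r) X.top ++ G, ?_,
    ((X.safePath_killWord _ _).append (X.safePath_pathWord hend X.top_mem)).append hG,
    fun r' z h => ?_⟩
  · intro h
    rw [List.append_assoc, List.append_eq_nil_iff] at h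
    exact hkill (h.1 ▸ ⟨r, rfl⟩)
  · obtain ⟨m, -, hm⟩ := safePath_append.mp h
    exact hsync m z hm

noncomputable def syncWord : List A := X.exists_syncWord.choose

lemma syncWord_ne_nil : X.syncWord ≠ [] := X.exists_syncWord.choose_spec.1

lemma safePath_syncWord : X.M.SafePath X.top X.syncWord X.top :=
  X.exists_syncWord.choose_spec.2.1

lemma eq_top_of_safePath_syncWord {r z : X.M.Q} (h : X.M.SafePath r X.syncWord z) :
    z = X.top :=
  X.exists_syncWord.choose_spec.2.2 r z h

noncomputable def approach (p : X.M.Q) : List A := X.syncWord ++ X.pathWord X.top p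

lemma approach_ne_nil (p : X.M.Q) : X.approach p ≠ [] := by
  simp [approach, X.syncWord_ne_nil]

lemma safePath_approach {p : X.M.Q} (hp : p ∈ X.S) : X.M.SafePath X.top (X.approach p) p :=
  X.safePath_syncWord.append (X.safePath_pathWord X.top_mem hp)

lemma eq_of_safePath_approach {p r z : X.M.Q} (hp : p ∈ X.S)
    (h : X.M.SafePath r (X.approach p) z) : z = p := by
  obtain ⟨m, hm, hmz⟩ := safePath_append.mp h
  obtain rfl := X.eq_top_of_safePath_syncWord hm
  exact hmz.unique X.safeDet (X.safePath_pathWord X.top_mem hp)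

/-- Every safe path reading `approach q` ends in `q`, where the killing word fails. -/
lemma not_safeReadable_approach_append_killWord {p q : X.M.Q} (hq : q ∈ X.S)
    (hsep : X.M.SafeSeparates p q) (r : X.M.Q) :
    ¬ X.M.SafeReadable r (X.approach q ++ X.killWord p q) := by
  rintro ⟨z, hz⟩
  obtain ⟨m, hm, hmz⟩ := safePath_append.mp hz
  obtain rfl := X.eq_of_safePath_approach hq hm
  exact X.not_safeReadable_killWord hsep ⟨z, hmz⟩

noncomputable def block (p q : X.M.Q) : List A := X.killWord p q ++ X.pathWord (X.killEnd p q) X.top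

lemma safePath_block {p : X.M.Q} (hp : p ∈ X.S) (q : X.M.Q) :
    X.M.SafePath p (X.block p q) X.top :=
  (X.safePath_killWord p q).append
    (X.safePath_pathWord (X.mem_of_safePath hp (X.safePath_killWord p q)) X.top_mem)

noncomputable def states : List X.M.Q := X.S_finite.toFinset.toList

lemma mem_states {p : X.M.Q} : p ∈ X.states ↔ p ∈ X.S := by
  simp [states]

lemma states_length_pos : 0 < X.states.length :=
  List.length_pos_of_mem (X.mem_states.mpr X.top_mem)

noncomputable def visit (i : ℕ) : X.M.Q :=
  X.states[i % X.states.length]'(Nat.mod_lt _ X.states_length_pos)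

lemma visit_mem (i : ℕ) : X.visit i ∈ X.S :=
  X.mem_states.mp (List.getElem_mem _)

lemma infinite_visit {p : X.M.Q} (hp : p ∈ X.S) : {i | X.visit i = p}.Infinite := by
  obtain ⟨k, hk, rfl⟩ := List.mem_iff_getElem.mp (X.mem_states.mpr hp)
  refine Set.infinite_of_forall_exists_gt fun n => ⟨k + X.states.length * (n + 1), ?_, ?_⟩
  · show X.visit _ = _
    simp only [visit, Nat.add_mul_mod_self_left, Nat.mod_eq_of_lt hk]
  · have := X.states_length_pos
    nlinarith

open Classical in
noncomputable def targets (p : X.M.Q) : List X.M.Q := X.states.filter fun r => decide (r ≠ p)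

noncomputable def target (p : X.M.Q) (n : ℕ) : X.M.Q :=
  (X.targets p).getD (n % (X.targets p).length) X.top

open Classical in
/-- The rounds are played adaptively against the resolver of `B`. Round `i` reads
`approach p` for `p = visit i`, reaching the mark `(p, b)`, where `b` is the current state of the
resolver; it then reads a word safe from `p` but not from the next target of `(p, b)`, and
returns to `top`. The second component counts the rounds played at each mark. -/
noncomputable def stage : ℕ → List A × (X.M.Q × X.B.Q → ℕ)
  | 0 => ([], fun _ => 0)
  | i + 1 =>
    let p := X.visit i
    let k := (p, (X.resolver ((stage i).1 ++ X.approach p)).dst)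
    let n := (stage i).2 k
    ((stage i).1 ++ X.approach p ++ X.block p (X.target p n),
      Function.update (stage i).2 k (n + 1))

noncomputable def pref (i : ℕ) : List A := (X.stage i).1

noncomputable def mark (i : ℕ) : X.M.Q × X.B.Q :=
  (X.visit i, (X.resolver (X.pref i ++ X.approach (X.visit i))).dst)

noncomputable def targetAt (i : ℕ) : X.M.Q := X.target (X.visit i) ((X.stage i).2 (X.mark i))

lemma pref_succ (i : ℕ) :
    X.pref (i + 1) = X.pref i ++ X.approach (X.visit i) ++ X.block (X.visit i) (X.targetAt i) :=
  rfl

open Classical in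
lemma stage_count (k : X.M.Q × X.B.Q) :
    ∀ i, (X.stage i).2 k = Nat.count (fun j => X.mark j = k) i
  | 0 => by simp [stage]
  | i + 1 => by
    rw [Nat.count_succ, ← stage_count k i]
    show Function.update (X.stage i).2 (X.mark i) _ k = _
    by_cases h : X.mark i = k
    · subst h
      simp only [Function.update_self, if_true]
      rfl
    · simp [Function.update_of_ne (Ne.symm h), h]

lemma safePath_pref : ∀ i, X.M.SafePath X.top (X.pref i) X.top
  | 0 => rfl
  | i + 1 => by
    rw [pref_succ]
    exact ((safePath_pref i).append (X.safePath_approach (X.visit_mem i))).append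
      (X.safePath_block (X.visit_mem i) _)

lemma pref_approach_prefix (i : ℕ) : X.pref i ++ X.approach (X.visit i) <+: X.pref (i + 1) := by
  rw [pref_succ]
  exact List.prefix_append _ _

lemma pref_prefix {i j : ℕ} (h : i ≤ j) : X.pref i <+: X.pref j := by
  induction h with
  | refl => exact List.prefix_refl _
  | step _ ih => exact ih.trans ((List.prefix_append _ _).trans (X.pref_approach_prefix _))

lemma le_length_pref : ∀ i, i ≤ (X.pref i).length
  | 0 => Nat.zero_le _
  | i + 1 => by
    have := le_length_pref i
    have := List.length_pos_of_ne_nil (X.approach_ne_nil (X.visit i))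
    rw [pref_succ]
    simp only [List.length_append]
    omega

noncomputable def word (m : ℕ) : A :=
  (X.pref (m + 1))[m]'(by have := X.le_length_pref (m + 1); omega)

lemma word_eq_getElem {i m : ℕ} (hm : m < (X.pref i).length) : X.word m = (X.pref i)[m] := by
  rcases le_total (m + 1) i with h | h
  · exact (X.pref_prefix h).getElem _
  · exact ((X.pref_prefix h).getElem hm).symm

lemma wordPrefix_word {i : ℕ} {u : List A} (hu : u <+: X.pref i) :
    wordPrefix X.word u.length = u :=
  List.ext_getElem (by simp) fun m _ hm => by
    rw [getElem_wordPrefix, X.word_eq_getElem (lt_of_lt_of_le hm hu.length_le), hu.getElem hm]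

lemma occursAt_word {i : ℕ} {u f : List A} (h : u ++ f <+: X.pref i) :
    OccursAt X.word u.length f := fun t ht => by
  have hlt : u.length + t < (u ++ f).length := by simp; omega
  rw [X.word_eq_getElem (lt_of_lt_of_le hlt h.length_le), ← h.getElem hlt,
    List.getElem_append_right (by omega)]
  simp

lemma word_mem_safeLang : X.word ∈ X.M.SafeLang X.top := by
  rw [mem_safeLang_iff X.safeDet]
  intro m
  have hpre : (X.pref m).take m <+: X.pref m := List.take_prefix _ _
  have h := X.wordPrefix_word hpre
  rw [List.length_take, min_eq_left (X.le_length_pref m)] at h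
  rw [h]
  exact SafeReadable.of_prefix hpre ⟨_, X.safePath_pref m⟩

noncomputable def run : ℕ → AutTrans X.B.Q A (Set X.C) := X.B.resRun X.resolver X.word

lemma isRunFrom_run : X.B.IsRunFrom X.B.init X.word X.run := (X.isResolver X.word).1

lemma exists_color_avoided : ∃ c n, ∀ m, n ≤ m → c ∉ (X.run m).out := by
  have h := (X.isResolver X.word).2
    (by rw [X.lang]; exact safeLang_subset_langFrom X.acc _ X.word_mem_safeLang)
  rwa [X.accB] at h

noncomputable def markPos (i : ℕ) : ℕ := (X.pref i ++ X.approach (X.visit i)).length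

lemma markPos_eq (i : ℕ) : X.markPos i = (X.pref i).length + (X.approach (X.visit i)).length :=
  List.length_append

lemma le_markPos (i : ℕ) : i ≤ X.markPos i := by
  have := X.le_length_pref i
  rw [markPos_eq]
  omega

lemma markPos_add_length_block (i : ℕ) :
    X.markPos i + (X.block (X.visit i) (X.targetAt i)).length = (X.pref (i + 1)).length := by
  rw [pref_succ, List.length_append (as := _ ++ _)]
  rfl

lemma occursAt_approach (i : ℕ) : OccursAt X.word (X.pref i).length (X.approach (X.visit i)) :=
  X.occursAt_word (X.pref_approach_prefix i)

lemma occursAt_block (i : ℕ) :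
    OccursAt X.word (X.markPos i) (X.block (X.visit i) (X.targetAt i)) :=
  X.occursAt_word (i := i + 1) (by rw [pref_succ])

lemma run_markPos_src (i : ℕ) : (X.run (X.markPos i)).src = (X.mark i).2 := by
  obtain ⟨m, hm⟩ : ∃ m, X.markPos i = m + 1 :=
    Nat.exists_eq_add_one.mpr (by simp [markPos, List.length_pos_of_ne_nil (X.approach_ne_nil _)])
  rw [hm, ← (X.isRunFrom_run.2 m).2.2]
  show (X.resolver (wordPrefix X.word (m + 1))).dst = _
  rw [← hm, markPos, X.wordPrefix_word (X.pref_approach_prefix i)]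
  rfl

lemma exists_infinite_mark {p : X.M.Q} (hp : p ∈ X.S) :
    ∃ b, {i | X.mark i = (p, b)}.Infinite := by
  by_contra! h
  have := X.B.fin
  refine X.infinite_visit hp ((Set.finite_iUnion h).subset fun i hi =>
    Set.mem_iUnion.mpr ⟨(X.mark i).2, ?_⟩)
  exact Prod.ext hi rfl

/-- Pigeonhole: `B` has fewer states than `S`. -/
lemma exists_pair : ∃ p ∈ X.S, ∃ q ∈ X.S, ∃ b, p ≠ q ∧
    {i | X.mark i = (p, b)}.Infinite ∧ {i | X.mark i = (q, b)}.Infinite := by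
  have : Nonempty X.B.Q := ⟨(X.resolver []).src⟩
  choose! f hf using fun p (hp : p ∈ X.S) => X.exists_infinite_mark hp
  let := X.B.fin
  obtain ⟨p, hp, q, hq, hne, hpq⟩ := Set.exists_ne_map_eq_of_ncard_lt_of_maps_to
    (s := X.S) (t := Set.univ) (f := f)
    (by rw [Set.ncard_univ, Nat.card_eq_fintype_card]; exact X.size_lt)
    fun _ _ => Set.mem_univ _
  exact ⟨p, hp, q, hq, f p, hne, hf p hp, hpq ▸ hf q hq⟩

open Classical in
lemma exists_targetAt_eq {p q : X.M.Q} {b : X.B.Q} (hq : q ∈ X.S) (hne : q ≠ p)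
    (hinf : {i | X.mark i = (p, b)}.Infinite) (n : ℕ) :
    ∃ i, n ≤ i ∧ X.mark i = (p, b) ∧ X.targetAt i = q := by
  obtain ⟨k, hk, hkq⟩ := List.mem_iff_getElem.mp
    (show q ∈ X.targets p by simp [targets, X.mem_states, hq, hne])
  let P : ℕ → Prop := fun j => X.mark j = (p, b)
  have hP : (Set.ofPred P).Infinite := hinf
  set c := k + (X.targets p).length * n
  have hmark := Nat.nth_mem_of_infinite hP c
  refine ⟨Nat.nth P c, ?_, hmark, ?_⟩
  · calc n ≤ c := by
          have : n ≤ (X.targets p).length * n := Nat.le_mul_of_pos_left n (by omega)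
          omega
      _ = Nat.count P (Nat.nth P c) := (Nat.count_nth_of_infinite hP c).symm
      _ ≤ _ := Nat.count_le _
  · have hvisit : X.visit (Nat.nth P c) = p := congrArg Prod.fst hmark
    rw [targetAt, X.stage_count, hmark, Nat.count_nth_of_infinite hP c, hvisit, target,
      Nat.add_mul_mod_self_left, Nat.mod_eq_of_lt hk, List.getD_eq_getElem _ _ hk, hkq]

lemma markPos_lt_markPos {i₁ i₂ : ℕ} (hi : i₁ < i₂) :
    X.markPos i₁ < X.markPos i₂ := by
  have h₁ := X.markPos_add_length_block i₁
  have h₂ := (X.pref_prefix (i := i₁ + 1) hi).length_le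
  have h₃ := X.markPos_eq i₂
  have := List.length_pos_of_ne_nil (X.approach_ne_nil (X.visit i₂))
  omega

lemma pumpWord_mem_langFrom_top {c : X.C} {n i₁ i₂ ℓ : ℕ}
    (hc : ∀ m, n ≤ m → c ∉ (X.run m).out) (hn : n ≤ i₁)
    (hb : (X.mark i₁).2 = (X.mark i₂).2)
    (hℓ : X.markPos i₂ = X.markPos i₁ + ℓ) (hℓpos : 0 < ℓ) :
    pumpWord X.word (X.markPos i₁) ℓ ∈ X.M.LangFrom X.top := by
  rw [← X.lang]
  refine pumpWord_mem_langFrom X.accB X.isRunFrom_run hc (hn.trans (X.le_markPos i₁)) hℓpos ?_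
  rw [← hℓ, X.run_markPos_src, X.run_markPos_src, hb]

lemma occursAt_pumpWord_approach_append_killWord {p q : X.M.Q} {i₁ i₂ ℓ : ℕ}
    (hvisit₁ : X.visit i₁ = p) (htarget : X.targetAt i₁ = q) (hvisit₂ : X.visit i₂ = q)
    (hi : i₁ < i₂) (hℓ : X.markPos i₂ = X.markPos i₁ + ℓ) (m : ℕ) :
    OccursAt (pumpWord X.word (X.markPos i₁) ℓ) ((X.pref i₂).length + m * ℓ)
      (X.approach q ++ X.killWord p q) := by
  have hkill := X.occursAt_block i₁
  have hlen₁ := X.markPos_add_length_block i₁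
  rw [hvisit₁, htarget, block] at hkill hlen₁
  rw [List.length_append] at hlen₁
  have happroach := X.occursAt_approach i₂
  have hmarkPos₂ := X.markPos_eq i₂
  rw [hvisit₂] at happroach hmarkPos₂
  have hlen₂ := (X.pref_prefix (i := i₁ + 1) hi).length_le
  refine occursAt_pumpWord_add_mul ((occursAt_pumpWord happroach (by omega)).append ?_)
    (by omega) m
  rw [← hmarkPos₂, hℓ]
  simpa using
    occursAt_pumpWord_add_mul (occursAt_pumpWord (ℓ := ℓ) hkill.left (by omega)) le_rfl 1

theorem false_of_safeSeparates {p q : X.M.Q} {b : X.B.Q} (hq : q ∈ X.S)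
    (hsep : X.M.SafeSeparates p q) (hpb : {i | X.mark i = (p, b)}.Infinite)
    (hqb : {i | X.mark i = (q, b)}.Infinite) : False := by
  have hne : q ≠ p := by
    rintro rfl
    obtain ⟨u, hu, hu'⟩ := hsep
    exact hu' hu
  obtain ⟨c, n, hc⟩ := X.exists_color_avoided
  obtain ⟨i₁, hn, hmark₁, htarget⟩ := X.exists_targetAt_eq hq hne hpb n
  obtain ⟨i₂, hmark₂, hi⟩ := hqb.exists_gt i₁
  obtain ⟨k, hk⟩ := Nat.exists_eq_add_of_lt (X.markPos_lt_markPos hi)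
  have hy := X.pumpWord_mem_langFrom_top hc hn (by rw [hmark₁, hmark₂]) hk (Nat.succ_pos k)
  refine not_mem_langFrom_of_occursAt X.acc (X.not_safeReadable_approach_append_killWord hq hsep)
    (fun m => ⟨(X.pref i₂).length + m * (k + 1), by nlinarith, ?_⟩) X.top hy
  exact X.occursAt_pumpWord_approach_append_killWord (congrArg Prod.fst hmark₁) htarget
    (congrArg Prod.fst hmark₂) hi hk m

theorem isEmpty (A : Type) : IsEmpty (BoundViolation A) := by
  refine ⟨fun X => ?_⟩
  obtain ⟨p, hp, q, hq, b, hne, hpb, hqb⟩ := X.exists_pair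
  rcases X.safeSeparates_or_safeSeparates hp hq hne with h | h
  · exact X.false_of_safeSeparates hq h hpb hqb
  · exact X.false_of_safeSeparates hp h hqb hpb

end BoundViolation

theorem stmt_6_general {A : Type} (L : Set (ℕ → A)) (hpi : PrefixIndependent L)
    (M : Automaton A (Set Unit)) (hacc : M.acc = genCoBuchi Unit)
    (hnice : M.Nice) (hsm : M.SafeMinimal) (hsc : M.SafeCentralised)
    (hlang : M.Lang = L)
    (nmax : ℕ)
    (hex : ∃ q : M.Q, (M.safeComponentOf q).ncard = nmax) :
    ∀ (C : Type) (_ : Fintype C) (B : Automaton A (Set C)),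
      B.acc = genCoBuchi C → B.HistoryDeterministic → B.Lang = L →
      nmax ≤ B.size := by
  intro C _ B haccB ⟨r, hr⟩ hlangB
  obtain ⟨s, rfl⟩ := hex
  obtain ⟨hreach, hsd, hnf, hdet⟩ := hnice
  have hL := langFrom_eq_of_prefixIndependent hpi hacc hreach hsd hlang
  have hequiv : ∀ p q, M.LangFrom p = M.LangFrom q := fun p q => (hL p).trans (hL q).symm
  obtain ⟨top, htop, hmax⟩ := exists_maximal_safeLang hsm hsc hequiv s
  by_contra! hlt
  exact (BoundViolation.isEmpty A).false
    { M, B, C, acc := hacc, safeDet := hdet, S := M.safeComponentOf s, top, top_mem := htop,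
      mem_of_safePath := mem_safeComponentOf_of_safePath hnf,
      exists_safePath := exists_safePath_of_mem_safeComponentOf,
      safeLang_injOn := fun p _ q _ => hsm p q (hequiv p q),
      eq_top_of_safeLang_subset := hmax _,
      accB := haccB, lang := hlangB.trans (hL top).symm, resolver := r, isResolver := hr,
      size_lt := hlt }

/-- minimality, prefix-independent case: if `A_min` is a nice,
safe minimal and safe centralised HD coBüchi automaton recognising a
prefix-independent language `L`, and `n_max` is the maximal size of a safe
component of `A_min`, then every HD generalised coBüchi automaton recognising
`L` has at least `n_max` states. -/
theorem stmt_6 {A : Type} (L : Set (ℕ → A)) (hpi : PrefixIndependent L)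
    (M : Automaton A (Set Unit)) (hacc : M.acc = genCoBuchi Unit)
    (hnice : M.Nice) (hsm : M.SafeMinimal) (hsc : M.SafeCentralised)
    (hhd : M.HistoryDeterministic) (hlang : M.Lang = L)
    (nmax : ℕ) (hub : ∀ q : M.Q, (M.safeComponentOf q).ncard ≤ nmax)
    (hex : ∃ q : M.Q, (M.safeComponentOf q).ncard = nmax) :
    ∀ (C : Type) (_ : Fintype C) (B : Automaton A (Set C)),
      B.acc = genCoBuchi C → B.HistoryDeterministic → B.Lang = L →
      nmax ≤ B.size :=
  stmt_6_general L hpi M hacc hnice hsm hsc hlang nmax hex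
end

section
/- Let A be a semantically deterministic generalised coBüchi automaton with colour set C recognising L ⊆ Σ^ω, and let R be a recurrent residual of L. Then for every state q of A recognising R, the localisation A|_R with initial state q recognises the language {w ∈ (Σ_R)^ω : w ∈ R} (identifying words over Σ_R with words over Σ); moreover, if A with initial state q is history-deterministic, then A|_R with initial state q is history-deterministic. -/
/-!
By semantic determinism, a state reached by a run of `M` from `q` after reading `v` recognises
`v⁻¹R`. Along a run on a concatenation of local letters the states at the block boundaries
therefore recognise `R` again, and cutting the run there gives a run of `A|_R` whose colours are
the unions of the colours within each block; conversely, the finite paths behind the transitions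
of a run of `A|_R` concatenate to a run of `M`. Blocks are finite and nonempty, so a colour occurs
finitely often in one colour sequence iff it does in the other. For history-determinism, a resolver
of `M` is run on the flattened input and cut at the block boundaries: the cut at block `n` only
depends on the first `n + 1` local letters.
-/

section Flatten

variable {α : Type}

abbrev blockStart (u : ℕ → List α) (k : ℕ) : ℕ := (flattenPrefix u k).length

@[simp]
lemma flattenPrefix_zero (u : ℕ → List α) : flattenPrefix u 0 = [] := rfl

lemma flattenPrefix_succ (u : ℕ → List α) (k : ℕ) :
    flattenPrefix u (k + 1) = flattenPrefix u k ++ u k := by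
  unfold flattenPrefix
  rw [List.ofFn_succ']
  simp [List.concat_eq_append]

lemma flattenPrefix_prefix (u : ℕ → List α) {k k' : ℕ} (h : k ≤ k') :
    flattenPrefix u k <+: flattenPrefix u k' := by
  induction k', h using Nat.le_induction with
  | base => exact List.prefix_refl _
  | succ k' _ ih => exact ih.trans (flattenPrefix_succ u k' ▸ List.prefix_append _ _)

lemma flattenPrefix_congr {u v : ℕ → List α} {n : ℕ} (h : ∀ k < n, u k = v k) :
    flattenPrefix u n = flattenPrefix v n :=
  congrArg List.flatten (List.ofFn_inj.2 (funext fun i => h i i.2))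

@[simp]
lemma blockStart_zero (u : ℕ → List α) : blockStart u 0 = 0 := rfl

lemma blockStart_succ (u : ℕ → List α) (k : ℕ) :
    blockStart u (k + 1) = blockStart u k + (u k).length := by
  simp [blockStart, flattenPrefix_succ]

lemma blockStart_strictMono {u : ℕ → List α} (hne : ∀ k, u k ≠ []) :
    StrictMono (blockStart u) :=
  strictMono_nat_of_lt_succ fun k => by
    rw [blockStart_succ]
    exact Nat.lt_add_of_pos_right (List.length_pos_iff.2 (hne k))

lemma lt_blockStart_succ {u : ℕ → List α} (hne : ∀ k, u k ≠ []) (n : ℕ) :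
    n < blockStart u (n + 1) :=
  (blockStart_strictMono hne).le_apply

namespace IsFlatten

variable {u : ℕ → List α} {x : ℕ → α}

lemma getElem_flattenPrefix (hx : IsFlatten u x) (k : ℕ) {n : ℕ}
    (h : n < (flattenPrefix u k).length) : (flattenPrefix u k)[n] = x n :=
  hx k n h

lemma getElem (hx : IsFlatten u x) (k : ℕ) {i : ℕ} (hi : i < (u k).length) :
    x (blockStart u k + i) = (u k)[i] := by
  have h : blockStart u k + i < blockStart u (k + 1) := by
    rw [blockStart_succ]
    omega
  rw [← hx.getElem_flattenPrefix (k + 1) h]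
  simp only [flattenPrefix_succ]
  rw [List.getElem_append_right (by simp [blockStart])]
  simp [blockStart]

lemma unique (hne : ∀ k, u k ≠ []) {y : ℕ → α} (hx : IsFlatten u x) (hy : IsFlatten u y) :
    x = y := by
  funext n
  have h := lt_blockStart_succ hne n
  rw [← hx.getElem_flattenPrefix (n + 1) h, hy.getElem_flattenPrefix (n + 1) h]

lemma map {β : Type} (hx : IsFlatten u x) (f : α → β) :
    IsFlatten (fun k => (u k).map f) (f ∘ x) := by
  intro k n h
  have e : flattenPrefix (fun k => (u k).map f) k = (flattenPrefix u k).map f := by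
    simp [flattenPrefix, List.map_flatten, List.map_ofFn, Function.comp_def]
  simp only [List.get_eq_getElem, List.getElem_of_eq e, List.getElem_map,
    hx.getElem_flattenPrefix, Function.comp_apply]

lemma flattenPrefix_eq_ofFn (hx : IsFlatten u x) (k : ℕ) :
    flattenPrefix u k = List.ofFn fun i : Fin (blockStart u k) => x i :=
  List.ext_getElem (by simp [blockStart]) fun n h _ => by
    rw [List.getElem_ofFn, hx.getElem_flattenPrefix]

lemma ofFn_block (hx : IsFlatten u x) (k : ℕ) :
    List.ofFn (fun i : Fin (u k).length => x (blockStart u k + i)) = u k :=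
  List.ext_getElem (by simp) fun i _ h => by rw [List.getElem_ofFn, hx.getElem k h]

lemma eq_of_agree {v : ℕ → List α} {y : ℕ → α} (hx : IsFlatten u x) (hy : IsFlatten v y)
    {n : ℕ} (huv : ∀ k < n, u k = v k) {i : ℕ} (hi : i < blockStart u n) : x i = y i := by
  have e := flattenPrefix_congr huv
  rw [← hx.getElem_flattenPrefix n hi, ← hy.getElem_flattenPrefix n (e ▸ hi)]
  simp only [List.getElem_of_eq e]

lemma mem (hne : ∀ k, u k ≠ []) (hx : IsFlatten u x) (n : ℕ) : ∃ k, x n ∈ u k := by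
  have h := lt_blockStart_succ hne n
  rw [← hx.getElem_flattenPrefix (n + 1) h]
  obtain ⟨l, hl, hmem⟩ := List.mem_flatten.1 (List.getElem_mem h)
  obtain ⟨i, rfl⟩ := List.mem_ofFn.1 hl
  exact ⟨i, hmem⟩

lemma rel_succ {r : α → α → Prop} (hne : ∀ k, u k ≠ []) (hx : IsFlatten u x)
    (hchain : ∀ k, (u k).IsChain r)
    (hlink : ∀ k, ∀ a ∈ (u k).getLast?, ∀ b ∈ (u (k + 1)).head?, r a b) (n : ℕ) :
    r (x n) (x (n + 1)) := by
  have h := lt_blockStart_succ hne (n + 1)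
  have hc : (flattenPrefix u (n + 2)).IsChain r := by
    refine (List.isChain_flatten ?_).2 ⟨?_, List.isChain_ofFn.2 fun i hi => hlink i⟩
    · simp only [List.mem_ofFn, not_exists]
      exact fun i => hne i
    · simp only [List.mem_ofFn, forall_exists_index, forall_apply_eq_imp_iff]
      exact fun i => hchain i
  have := hc.getElem n h
  rwa [hx.getElem_flattenPrefix, hx.getElem_flattenPrefix] at this

lemma iUnion_Ico {β : Type} (hx : IsFlatten u x) (f : α → Set β) (k : ℕ) :
    ⋃ i ∈ Set.Ico (blockStart u k) (blockStart u (k + 1)), f (x i) = ⋃ a ∈ u k, f a := by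
  ext c
  simp only [Set.mem_iUnion, Set.mem_Ico, blockStart_succ, exists_prop, List.mem_iff_getElem]
  constructor
  · rintro ⟨i, ⟨h1, h2⟩, hc⟩
    obtain ⟨j, rfl⟩ := Nat.exists_eq_add_of_le h1
    have hj : j < (u k).length := by omega
    exact ⟨_, ⟨j, hj, rfl⟩, hx.getElem k hj ▸ hc⟩
  · rintro ⟨_, ⟨j, hj, rfl⟩, hc⟩
    exact ⟨blockStart u k + j, ⟨by omega, by omega⟩, (hx.getElem k hj).symm ▸ hc⟩

end IsFlatten

-- `d` is only read if some block is empty.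
def flatSeq (u : ℕ → List α) (d : α) (n : ℕ) : α := (flattenPrefix u (n + 1)).getD n d

lemma isFlatten_flatSeq {u : ℕ → List α} (hne : ∀ k, u k ≠ []) (d : α) :
    IsFlatten u (flatSeq u d) := by
  intro k n h
  have h' := lt_blockStart_succ hne n
  rw [flatSeq, List.getD_eq_getElem _ _ h', List.get_eq_getElem]
  rcases le_total k (n + 1) with hk | hk
  · exact (flattenPrefix_prefix u hk).getElem h
  · exact ((flattenPrefix_prefix u hk).getElem h').symm

end Flatten

section Residual

variable {α : Type}

lemma wordAppend_nil (w : ℕ → α) : wordAppend [] w = w := by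
  funext n
  simp [wordAppend]

lemma wordAppend_append (u v : List α) (w : ℕ → α) :
    wordAppend (u ++ v) w = wordAppend u (wordAppend v w) := by
  funext n
  simp only [wordAppend, List.length_append, List.get_eq_getElem]
  rcases lt_or_ge n u.length with h | h
  · rw [dif_pos (by omega), dif_pos h, List.getElem_append_left h]
  · rw [dif_neg (by omega : ¬ n < u.length)]
    rcases lt_or_ge n (u.length + v.length) with h2 | h2
    · rw [dif_pos h2, dif_pos (by omega), List.getElem_append_right (by omega)]
    · rw [dif_neg (by omega), dif_neg (by omega), Nat.sub_sub]

@[simp]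
lemma residualLang_nil (L : Set (ℕ → α)) : residualLang [] L = L := by
  simp [residualLang, wordAppend_nil]

lemma residualLang_append (u v : List α) (L : Set (ℕ → α)) :
    residualLang (u ++ v) L = residualLang v (residualLang u L) := by
  ext w
  simp [residualLang, wordAppend_append]

lemma residualLang_flattenPrefix_localAlphabet (R : Set (ℕ → α))
    (u : ℕ → localAlphabet R) (k : ℕ) :
    residualLang (flattenPrefix (fun n => (u n).1) k) R = R := by
  induction k with
  | zero => simp
  | succ k ih => rw [flattenPrefix_succ, residualLang_append, ih, (u k).2.2.1]

end Residual

lemma Nat.exists_mem_Ico_of_strictMono {b : ℕ → ℕ} (hb : StrictMono b) {i : ℕ}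
    (hi : b 0 ≤ i) : ∃ k, b k ≤ i ∧ i < b (k + 1) := by
  induction i, hi using Nat.le_induction with
  | base => exact ⟨0, le_rfl, hb (Nat.lt_succ_self 0)⟩
  | succ i _ ih =>
    obtain ⟨k, hki, hik⟩ := ih
    rcases (Nat.succ_le_of_lt hik).lt_or_eq with h | h
    · exact ⟨k, by omega, h⟩
    · exact ⟨k + 1, h.ge, h.trans_lt (hb (Nat.lt_succ_self (k + 1)))⟩

section GenCoBuchi

variable {C : Type}

lemma genCoBuchi_shift_iff (f : ℕ → Set C) :
    (fun n => f (n + 1)) ∈ genCoBuchi C ↔ f ∈ genCoBuchi C := by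
  constructor
  · rintro ⟨c, n, h⟩
    refine ⟨c, n + 1, fun m hm => ?_⟩
    obtain ⟨m, rfl⟩ := Nat.exists_eq_add_of_le' (show 1 ≤ m by omega)
    exact h m (by omega)
  · rintro ⟨c, n, h⟩
    exact ⟨c, n, fun m hm => h (m + 1) (by omega)⟩

lemma genCoBuchi_iUnion_Ico_iff {b : ℕ → ℕ} (hb : StrictMono b) (f : ℕ → Set C) :
    (fun k => ⋃ i ∈ Set.Ico (b k) (b (k + 1)), f i) ∈ genCoBuchi C ↔ f ∈ genCoBuchi C := by
  simp only [genCoBuchi, Set.mem_ofPred_eq, Set.mem_iUnion, Set.mem_Ico, exists_prop, not_exists,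
    not_and]
  constructor
  · rintro ⟨c, N, h⟩
    refine ⟨c, b N, fun i hi hc => ?_⟩
    obtain ⟨k, hki, hik⟩ := Nat.exists_mem_Ico_of_strictMono hb ((hb.monotone N.zero_le).trans hi)
    have hNk : N ≤ k := Nat.lt_succ_iff.1 (hb.lt_iff_lt.1 (hi.trans_lt hik))
    exact h k hNk i ⟨hki, hik⟩ hc
  · rintro ⟨c, N, h⟩
    exact ⟨c, N, fun k hk i hki => h i (hk.trans (hb.le_apply.trans hki.1))⟩

end GenCoBuchi

namespace Automaton

section Runs

variable {A Γ : Type} {M : Automaton A Γ} {q : M.Q} {x : ℕ → A} {ρ : ℕ → AutTrans M.Q A Γ}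

lemma IsRunFrom.tail (h : M.IsRunFrom q x ρ) :
    M.IsRunFrom (ρ 0).dst (fun n => x (n + 1)) (fun n => ρ (n + 1)) :=
  ⟨(h.2 0).2.2.symm, fun n => h.2 (n + 1)⟩

lemma IsRunFrom.cons {t : AutTrans M.Q A Γ} (ht : t ∈ M.delta) (h : M.IsRunFrom t.dst x ρ) :
    M.IsRunFrom t.src (wordAppend [t.lab] x) (fun | 0 => t | n + 1 => ρ n) := by
  refine ⟨rfl, fun n => ?_⟩
  cases n with
  | zero => exact ⟨ht, by simp [wordAppend], h.1.symm⟩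
  | succ n => exact ⟨(h.2 n).1, by simp [wordAppend, (h.2 n).2.1], (h.2 n).2.2⟩

lemma IsRunFrom.src_eq_of_agree {y : ℕ → A} {σ : ℕ → AutTrans M.Q A Γ}
    (hρ : M.IsRunFrom q x ρ) (hσ : M.IsRunFrom q y σ) {n : ℕ} (hagree : ∀ i < n, ρ i = σ i) :
    (ρ n).src = (σ n).src := by
  cases n with
  | zero => rw [hρ.1, hσ.1]
  | succ n => rw [← (hρ.2 n).2.2, ← (hσ.2 n).2.2, hagree n n.lt_succ_self]

variable (hacc : ∀ f : ℕ → Γ, (fun n => f (n + 1)) ∈ M.acc ↔ f ∈ M.acc)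
  (hsd : M.SemanticallyDeterministic)
include hacc hsd

lemma langFrom_dst_eq_residualLang {t : AutTrans M.Q A Γ} (ht : t ∈ M.delta) :
    M.LangFrom t.dst = residualLang [t.lab] (M.LangFrom t.src) := by
  ext w
  constructor
  · rintro ⟨ρ, hρ, hρacc⟩
    exact ⟨_, hρ.cons ht, (hacc _).1 hρacc⟩
  · rintro ⟨ρ, hρ, hρacc⟩
    have hsame : M.LangFrom (ρ 0).dst = M.LangFrom t.dst :=
      hsd _ (hρ.2 0).1 t ht hρ.1 (by simp [(hρ.2 0).2.1, wordAppend])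
    rw [← hsame]
    have hw : (fun n => wordAppend [t.lab] w (n + 1)) = w := by
      funext n
      simp [wordAppend]
    exact ⟨_, hw ▸ hρ.tail, (hacc _).2 hρacc⟩

lemma IsRunFrom.langFrom_src (h : M.IsRunFrom q x ρ) (n : ℕ) :
    M.LangFrom (ρ n).src = residualLang (List.ofFn fun i : Fin n => x i) (M.LangFrom q) := by
  induction n with
  | zero => simp [h.1]
  | succ n ih =>
    rw [← (h.2 n).2.2, langFrom_dst_eq_residualLang hacc hsd (h.2 n).1, ih, (h.2 n).2.1,
      List.ofFn_succ', List.concat_eq_append, residualLang_append]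
    rfl

end Runs

section Paths

variable {A C : Type} {M : Automaton A (Set C)}

lemma IsRunFrom.pathCol {q : M.Q} {x : ℕ → A} {ρ : ℕ → AutTrans M.Q A (Set C)}
    (h : M.IsRunFrom q x ρ) (l m : ℕ) :
    PathCol M (ρ m).src (List.ofFn fun i : Fin l => x (m + i))
      (⋃ i ∈ Set.Ico m (m + l), (ρ i).out) (ρ (m + l)).src := by
  induction l generalizing m with
  | zero => simpa using PathCol.nil _
  | succ l ih =>
    have hunion : (⋃ i ∈ Set.Ico m (m + (l + 1)), (ρ i).out) =
        (ρ m).out ∪ ⋃ i ∈ Set.Ico (m + 1) (m + 1 + l), (ρ i).out := by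
      rw [show m + 1 + l = m + (l + 1) by omega, ← Set.insert_Ico_add_one_left_eq_Ico
        (by omega), Set.biUnion_insert]
    have hword : (List.ofFn fun i : Fin (l + 1) => x (m + i)) =
        x m :: List.ofFn fun i : Fin l => x (m + 1 + i) := by
      simp [List.ofFn_succ, Nat.add_assoc, Nat.add_comm 1]
    rw [hunion, hword, show m + (l + 1) = m + 1 + l by omega]
    exact PathCol.cons (ρ m) (h.2 m).1 rfl (h.2 m).2.1 ((h.2 m).2.2 ▸ ih (m + 1))

lemma PathCol.exists_transitions {p q : M.Q} {w : List A} {X : Set C} (h : PathCol M p w X q) :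
    ∃ ts : List (AutTrans M.Q A (Set C)), (∀ t ∈ ts, t ∈ M.delta) ∧
      ts.map AutTrans.lab = w ∧ (⋃ t ∈ ts, t.out) = X ∧
      ts.IsChain (fun s t => s.dst = t.src) ∧ (∀ t ∈ ts.head?, t.src = p) ∧
      (ts.getLast?.map AutTrans.dst).getD p = q := by
  induction h with
  | nil q => exact ⟨[], by simp⟩
  | @cons q r a w X t ht hsrc hlab _ ih =>
    obtain ⟨ts, hmem, hlab', hout, hchain, hhead, hlast⟩ := ih
    refine ⟨t :: ts, ?_, by simp [hlab, hlab'], by simp [hout], ?_, by simp [hsrc], ?_⟩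
    · simpa [ht] using hmem
    · exact List.isChain_cons.2 ⟨fun s hs => (hhead s hs).symm, hchain⟩
    · cases ts with
      | nil => simpa using hlast
      | cons s ts =>
        rw [List.getLast?_cons_cons]
        rw [List.getLast?_eq_getLast_of_ne_nil (List.cons_ne_nil _ _)] at hlast ⊢
        exact hlast

end Paths

end Automaton

section Localisation

open Automaton

variable {A C : Type} {M : Automaton A (Set C)} (hacc : M.acc = genCoBuchi C)
  (hsd : M.SemanticallyDeterministic) {R : Set (ℕ → A)} {q : M.Q} (hq : M.LangFrom q = R)
  {x : ℕ → A} {ρ : ℕ → AutTrans M.Q A (Set C)} {u : ℕ → localAlphabet R}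

include hacc hsd hq in
lemma Automaton.IsRunFrom.langFrom_src_blockStart (hρ : M.IsRunFrom q x ρ)
    (hx : IsFlatten (fun k => (u k).1) x) (k : ℕ) :
    M.LangFrom (ρ (blockStart (fun k => (u k).1) k)).src = R := by
  rw [hρ.langFrom_src (fun f => hacc ▸ genCoBuchi_shift_iff f) hsd, ← hx.flattenPrefix_eq_ofFn,
    hq, residualLang_flattenPrefix_localAlphabet]

def localRun (hρ : M.IsRunFrom q x ρ) (hx : IsFlatten (fun k => (u k).1) x) (k : ℕ) :
    AutTrans (localAut M R ⟨q, hq⟩).Q (localAlphabet R) (Set C) :=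
  ⟨⟨(ρ (blockStart (fun k => (u k).1) k)).src, hρ.langFrom_src_blockStart hacc hsd hq hx k⟩, u k,
    ⋃ i ∈ Set.Ico (blockStart (fun k => (u k).1) k) (blockStart (fun k => (u k).1) (k + 1)),
      (ρ i).out,
    ⟨(ρ (blockStart (fun k => (u k).1) (k + 1))).src,
      hρ.langFrom_src_blockStart hacc hsd hq hx (k + 1)⟩⟩

variable (hρ : M.IsRunFrom q x ρ) (hx : IsFlatten (fun k => (u k).1) x)

lemma localRun_isRunFrom :
    (localAut M R ⟨q, hq⟩).IsRunFrom ⟨q, hq⟩ u (localRun hacc hsd hq hρ hx) := by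
  refine ⟨Subtype.ext hρ.1, fun k => ⟨?_, rfl, rfl⟩⟩
  have h := hρ.pathCol (u k).1.length (blockStart (fun k => (u k).1) k)
  rwa [hx.ofFn_block, ← blockStart_succ] at h

lemma localRun_out_mem_genCoBuchi_iff :
    (fun k => (localRun hacc hsd hq hρ hx k).out) ∈ genCoBuchi C ↔
      (fun n => (ρ n).out) ∈ genCoBuchi C :=
  genCoBuchi_iUnion_Ico_iff (blockStart_strictMono fun k => (u k).2.1) _

lemma localRun_congr {y : ℕ → A} {σ : ℕ → AutTrans M.Q A (Set C)} {v : ℕ → localAlphabet R}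
    (hσ : M.IsRunFrom q y σ) (hy : IsFlatten (fun k => (v k).1) y) {n : ℕ}
    (huv : ∀ k ≤ n, u k = v k) (hρσ : ∀ i < blockStart (fun k => (u k).1) (n + 1), ρ i = σ i) :
    localRun hacc hsd hq hρ hx n = localRun hacc hsd hq hσ hy n := by
  have hstart : ∀ k ≤ n + 1, blockStart (fun k => (u k).1) k = blockStart (fun k => (v k).1) k :=
    fun k hk => by
      rw [blockStart, blockStart, flattenPrefix_congr fun i hi => congrArg Subtype.val (huv i (by omega))]
  have hmono := (blockStart_strictMono fun k => (u k).2.1).monotone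
  unfold localRun
  congr 1
  · refine Subtype.ext ?_
    dsimp only
    rw [← hstart n n.le_succ]
    exact hρ.src_eq_of_agree hσ fun i hi => hρσ i (hi.trans_le (hmono n.le_succ))
  · exact huv n le_rfl
  · rw [← hstart n n.le_succ, ← hstart (n + 1) le_rfl]
    exact Set.iUnion₂_congr fun i hi => by rw [hρσ i hi.2]
  · refine Subtype.ext ?_
    dsimp only
    rw [← hstart (n + 1) le_rfl]
    exact hρ.src_eq_of_agree hσ hρσ

end Localisation

section LocalLanguage

open Automaton

variable {A C : Type} {M : Automaton A (Set C)} (hacc : M.acc = genCoBuchi C)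
  (hsd : M.SemanticallyDeterministic) {R : Set (ℕ → A)} {q : M.Q} (hq : M.LangFrom q = R)
  {u : ℕ → localAlphabet R}

include hacc in
lemma exists_isFlatten_mem_of_mem_localAut_lang (hu : u ∈ (localAut M R ⟨q, hq⟩).Lang) :
    ∃ x : ℕ → A, IsFlatten (fun n => (u n).1) x ∧ x ∈ R := by
  obtain ⟨σ, hσ, hσacc⟩ := hu
  have hpath (k : ℕ) : PathCol M (σ k).src.1 (u k).1 (σ k).out (σ k).dst.1 :=
    (hσ.2 k).2.1 ▸ (hσ.2 k).1
  choose ts hmem hlab hout hchain hhead hlast using fun k => (hpath k).exists_transitions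
  have hne (k : ℕ) : ts k ≠ [] := fun h => (u k).2.1 (by rw [← hlab k, h, List.map_nil])
  set ρ := flatSeq ts ((ts 0).head (hne 0))
  have hρ : IsFlatten ts ρ := isFlatten_flatSeq hne _
  refine ⟨fun n => (ρ n).lab, by simpa only [hlab, Function.comp_def] using hρ.map AutTrans.lab, ?_⟩
  refine hq ▸ ⟨ρ, ⟨?_, fun n => ⟨?_, rfl, ?_⟩⟩, ?_⟩
  · have h0 := hρ.getElem 0 (List.length_pos_iff.2 (hne 0))
    rw [blockStart_zero, Nat.zero_add] at h0
    rw [h0, hhead 0 _ (by simp [List.head?_eq_getElem?]), hσ.1]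
    rfl
  · obtain ⟨k, hk⟩ := hρ.mem hne n
    exact hmem k _ hk
  · refine hρ.rel_succ hne hchain (fun k a ha b hb => ?_) n
    have hdst := hlast k
    rw [ha, Option.map_some, Option.getD_some] at hdst
    rw [hdst, (hσ.2 k).2.2, hhead (k + 1) b hb]
  · have hblocks : (fun k => (σ k).out) =
        fun k => ⋃ i ∈ Set.Ico (blockStart ts k) (blockStart ts (k + 1)), (ρ i).out :=
      funext fun k => by rw [← hout k, hρ.iUnion_Ico AutTrans.out k]
    rw [hacc, ← genCoBuchi_iUnion_Ico_iff (blockStart_strictMono hne), ← hblocks]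
    exact hσacc

include hacc hsd in
lemma mem_localAut_lang_of_isFlatten {x : ℕ → A} (hx : IsFlatten (fun n => (u n).1) x)
    (hxR : x ∈ R) : u ∈ (localAut M R ⟨q, hq⟩).Lang := by
  obtain ⟨ρ, hρ, hρacc⟩ := hq ▸ hxR
  rw [hacc] at hρacc
  exact ⟨_, localRun_isRunFrom hacc hsd hq hρ hx,
    (localRun_out_mem_genCoBuchi_iff hacc hsd hq hρ hx).2 hρacc⟩

include hacc hsd in
lemma localAut_lang :
    (localAut M R ⟨q, hq⟩).Lang =
      {u | ∃ x : ℕ → A, IsFlatten (fun n => (u n).1) x ∧ x ∈ R} := by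
  ext u
  exact ⟨exists_isFlatten_mem_of_mem_localAut_lang hacc hq, fun ⟨_, hx, hxR⟩ =>
    mem_localAut_lang_of_isFlatten hacc hsd hq hx hxR⟩

end LocalLanguage

section LocalResolver

open Automaton

variable {A C : Type} {M : Automaton A (Set C)} (hacc : M.acc = genCoBuchi C)
  (hsd : M.SemanticallyDeterministic) {R : Set (ℕ → A)} {q : M.Q} (hq : M.LangFrom q = R)
  {r : List A → AutTrans M.Q A (Set C)}

lemma Automaton.IsResolver.isRunFrom_withInit (hr : (withInit M q).IsResolver r) (w : ℕ → A) :
    M.IsRunFrom q w ((withInit M q).resRun r w) :=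
  (hr w).1

/-- Padding `us` with copies of `d` gives an infinite word on which `r` chooses a run; its cut at
the last block of `us` only depends on `us`, since `r` reads prefixes. -/
noncomputable def localResolver (hr : (withInit M q).IsResolver r) (d : localAlphabet R) (us : List (localAlphabet R)) :
    AutTrans (localAut M R ⟨q, hq⟩).Q (localAlphabet R) (Set C) :=
  localRun hacc hsd hq
    (hr.isRunFrom_withInit (flatSeq (fun k => (us.getD k d).1) (d.1.head d.2.1)))
    (isFlatten_flatSeq (fun k => (us.getD k d).2.1) _) (us.length - 1)

lemma resRun_localResolver (hr : (withInit M q).IsResolver r) (d : localAlphabet R) {u : ℕ → localAlphabet R} {x : ℕ → A}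
    (hx : IsFlatten (fun k => (u k).1) x) :
    (localAut M R ⟨q, hq⟩).resRun (localResolver hacc hsd hq hr d) u =
      localRun hacc hsd hq (hr.isRunFrom_withInit x) hx := by
  funext n
  have hpad : ∀ k ≤ n, (List.ofFn fun i : Fin (n + 1) => u i).getD k d = u k := fun k hk => by
    rw [List.getD_eq_getElem _ _ (by simp; omega), List.getElem_ofFn]
  simp only [resRun, localResolver, List.length_ofFn, Nat.add_sub_cancel]
  refine localRun_congr hacc hsd hq _ _ _ _ hpad fun i hi => ?_
  have hpadx := isFlatten_flatSeq
    (fun k => ((List.ofFn fun i : Fin (n + 1) => u i).getD k d).2.1) (d.1.head d.2.1)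
  refine congrArg r (List.ofFn_inj.2 (funext fun j => ?_))
  exact hpadx.eq_of_agree hx (fun k hk => by rw [hpad k (by omega)]) (j.2.trans_le hi)

include hacc hsd in
theorem localAut_historyDeterministic (hrec : (localAlphabet R).Nonempty)
    (hhd : (withInit M q).HistoryDeterministic) :
    (localAut M R ⟨q, hq⟩).HistoryDeterministic := by
  obtain ⟨r, hr⟩ := hhd
  obtain ⟨d, hd⟩ := hrec
  refine ⟨localResolver hacc hsd hq hr ⟨d, hd⟩, fun u => ?_⟩
  have hne (k : ℕ) : (u k).1 ≠ [] := (u k).2.1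
  have hx := isFlatten_flatSeq hne ((u 0).1.head (hne 0))
  rw [resRun_localResolver hacc hsd hq hr _ hx]
  refine ⟨localRun_isRunFrom hacc hsd hq _ hx, fun hu => ?_⟩
  obtain ⟨y, hy, hyR⟩ := exists_isFlatten_mem_of_mem_localAut_lang hacc hq hu
  have hxR : flatSeq (fun k => (u k).1) ((u 0).1.head (hne 0)) ∈ M.LangFrom q := by
    rw [hq, hx.unique hne hy]
    exact hyR
  exact (localRun_out_mem_genCoBuchi_iff hacc hsd hq _ hx).2 (hacc ▸ (hr _).2 hxR)

end LocalResolver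

theorem stmt_9_general {A C : Type}
    (M : Automaton A (Set C)) (hacc : M.acc = genCoBuchi C)
    (hsd : M.SemanticallyDeterministic)
    (R : Set (ℕ → A))
    (hrec : (localAlphabet R).Nonempty)
    (q : M.Q) (hq : M.LangFrom q = R) :
    (localAut M R ⟨q, hq⟩).Lang =
      {u : ℕ → ↥(localAlphabet R) |
        ∃ x : ℕ → A, IsFlatten (fun n => (u n).1) x ∧ x ∈ R} ∧
    ((withInit M q).HistoryDeterministic →
      (localAut M R ⟨q, hq⟩).HistoryDeterministic) :=
  ⟨localAut_lang hacc hsd hq, localAut_historyDeterministic hacc hsd hq hrec⟩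

/-- for a semantically deterministic generalised coBüchi automaton
`A` recognising `L` and a recurrent residual `R` of `L`, the localisation
`A|_R`, started in any state `q` recognising `R`, recognises
`{w ∈ (Σ_R)^ω | w ∈ R}` (identifying words over `Σ_R` with words over `Σ` by
concatenation); moreover, if `A` with initial state `q` is
history-deterministic, then so is `A|_R` with initial state `q`. -/
theorem stmt_9 {A C : Type} [Fintype C] (L : Set (ℕ → A))
    (M : Automaton A (Set C)) (hacc : M.acc = genCoBuchi C)
    (hsd : M.SemanticallyDeterministic) (hlang : M.Lang = L)
    (R : Set (ℕ → A)) (hres : ∃ u : List A, residualLang u L = R)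
    (hrec : (localAlphabet R).Nonempty)
    (q : M.Q) (hq : M.LangFrom q = R) :
    (localAut M R ⟨q, hq⟩).Lang =
      {u : ℕ → ↥(localAlphabet R) |
        ∃ x : ℕ → A, IsFlatten (fun n => (u n).1) x ∧ x ∈ R} ∧
    ((withInit M q).HistoryDeterministic →
      (localAut M R ⟨q, hq⟩).HistoryDeterministic) :=
  stmt_9_general M hacc hsd R hrec q hq
end
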